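/- arXiv:1810.06849 — 7 statements merged into one kernel-verified Lean document; each statement's English description precedes it below -/
import Mathlib

section
/- Let p be a probability distribution on ℕ with mean m = ∑_{n≥0} n p(n) ∈ (0,1), and let α > 1 be such that ∑_{n≥0} n^α p(n) < ∞ and α(1−m) > p(0). Then there exist a constant λ₁ > p(0) and a constant C ≥ 0 such that for every integer x ≥ 1: x · ∑_{n=0}^∞ p(n) [ (x+n−1)^α − x^α ] ≤ −λ₁ x^α + C. That is, the Lyapunov function V(x) = x^α satisfies the drift inequality LV ≤ −λ₁ V + C with λ₁ strictly larger than p(0), the maximal absorption rate of the process. -/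
/-!
Dividing the drift by `V(x) = x^α` gives `∑ p(n) · x((1 + (n-1)/x)^α - 1)`, whose `n`-th term
tends to `α (n - 1) p(n)` as `x → ∞`. By the mean value theorem these terms are dominated by
`α (n+1)^α p(n)`, which is summable thanks to the `α`-th moment, so by dominated convergence
`LV(x) / V(x) → α (m - 1) < -p(0)`. Any `λ₁` strictly between `p(0)` and `α (1 - m)` then
satisfies `LV ≤ -λ₁ V` for large `x`, and the finitely many remaining `x` are absorbed into `C`.
-/

open Filter Topology Set

lemma abs_rpow_sub_rpow_le_mul_max {α a b : ℝ} (hα : 1 ≤ α) (ha : 0 ≤ a) (hb : 0 ≤ b) :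
    |b ^ α - a ^ α| ≤ α * max a b ^ (α - 1) * |b - a| := by
  have hderiv (t : ℝ) : HasDerivWithinAt (· ^ α) (α * t ^ (α - 1)) (Icc 0 (max a b)) t :=
    (Real.hasDerivAt_rpow_const (Or.inr hα)).hasDerivWithinAt
  refine (convex_Icc 0 (max a b)).norm_image_sub_le_of_norm_hasDerivWithin_le
    (fun t _ => hderiv t) (fun t ht => ?_) ⟨ha, le_max_left a b⟩ ⟨hb, le_max_right a b⟩
  rw [Real.norm_eq_abs, abs_of_nonneg (by have := ht.1; positivity)]
  exact mul_le_mul_of_nonneg_left (Real.rpow_le_rpow ht.1 ht.2 (by linarith)) (by linarith)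

lemma mul_abs_rpow_add_sub_one_sub_rpow_le {α x t : ℝ} (hα : 1 ≤ α) (hx : 1 ≤ x) (ht : 0 ≤ t) :
    x * |(x + t - 1) ^ α - x ^ α| ≤ α * (t + 1) ^ α * x ^ α := by
  have hx0 : 0 < x := by linarith
  have hmax : max x (x + t - 1) ≤ x * (t + 1) := max_le (by nlinarith) (by nlinarith)
  calc x * |(x + t - 1) ^ α - x ^ α|
      ≤ x * (α * (x * (t + 1)) ^ (α - 1) * (t + 1)) := by
        gcongr
        refine (abs_rpow_sub_rpow_le_mul_max hα hx0.le (by linarith)).trans ?_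
        gcongr
        exact abs_le.2 ⟨by linarith, by linarith⟩
    _ = α * (t + 1) ^ α * x ^ α := by
        rw [Real.mul_rpow hx0.le (by linarith), Real.rpow_sub_one hx0.ne',
          Real.rpow_sub_one (by linarith : t + 1 ≠ 0)]
        field_simp

lemma tendsto_mul_rpow_add_sub_rpow_div_rpow (α c : ℝ) :
    Tendsto (fun x : ℝ => x * ((x + c) ^ α - x ^ α) / x ^ α) atTop (𝓝 (α * c)) := by
  rcases eq_or_ne c 0 with rfl | hc
  · simp
  -- `x ((x + c)^α - x^α) / x^α = c · slope of (1 + ·)^α on [0, c/x]`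
  have hslope : Tendsto (fun t : ℝ => t⁻¹ * ((1 + t) ^ α - 1)) (𝓝[≠] 0) (𝓝 α) := by
    have hderiv : HasDerivAt (fun t : ℝ => (1 + t) ^ α) α 0 := by
      simpa using (Real.hasDerivAt_rpow_const (x := 1 + 0) (p := α)
        (Or.inl (by norm_num))).comp_const_add 1 0
    simpa using hderiv.tendsto_slope_zero
  have hdiv : Tendsto (fun x : ℝ => c / x) atTop (𝓝[≠] 0) :=
    tendsto_nhdsWithin_of_tendsto_nhds_of_eventually_within _
      (tendsto_const_nhds.div_atTop tendsto_id)
      (eventually_gt_atTop 0 |>.mono fun x hx => div_ne_zero hc hx.ne')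
  rw [mul_comm α c]
  refine ((hslope.comp hdiv).const_mul c).congr' ?_
  filter_upwards [eventually_gt_atTop 0, eventually_gt_atTop (-c)] with x hx hxc
  have : 1 + c / x = (x + c) / x := by field_simp
  simp only [Function.comp_apply, this, Real.div_rpow (by linarith : 0 ≤ x + c) hx.le]
  have := Real.rpow_pos_of_pos hx α
  field_simp

lemma summable_add_one_rpow_mul {p : ℕ → ℝ} {α : ℝ} (hα : 1 ≤ α) (hp : ∀ n, 0 ≤ p n)
    (hP : Summable p) (hmom : Summable fun n : ℕ => (n : ℝ) ^ α * p n) :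
    Summable fun n : ℕ => ((n : ℝ) + 1) ^ α * p n := by
  refine .of_nonneg_of_le (fun n => by have := hp n; positivity) (fun n => ?_)
    ((hmom.add hP).mul_left (2 ^ (α - 1)))
  have h := NNReal.rpow_add_le_mul_rpow_add_rpow n 1 hα
  rw [← NNReal.coe_le_coe] at h
  push_cast [Real.one_rpow] at h
  calc ((n : ℝ) + 1) ^ α * p n ≤ 2 ^ (α - 1) * ((n : ℝ) ^ α + 1) * p n := by gcongr; exact hp n
    _ = 2 ^ (α - 1) * ((n : ℝ) ^ α * p n + p n) := by ring

noncomputable def galtonWatsonGenerator (p : ℕ → ℝ) (V : ℝ → ℝ) (x : ℕ) : ℝ :=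
  (x : ℝ) * ∑' n : ℕ, p n * (V ((x : ℝ) + (n : ℝ) - 1) - V x)

lemma tendsto_galtonWatsonGenerator_rpow_div_rpow {p : ℕ → ℝ} {α : ℝ} (hα : 1 ≤ α)
    (hp : ∀ n, 0 ≤ p n) (hp1 : ∑' n, p n = 1)
    (hmom : Summable fun n : ℕ => (n : ℝ) ^ α * p n) :
    Tendsto (fun x : ℕ => galtonWatsonGenerator p (· ^ α) x / (x : ℝ) ^ α) atTop
      (𝓝 (α * (∑' n : ℕ, (n : ℝ) * p n - 1))) := by
  have hP : Summable p := by
    by_contra h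
    simp [tsum_eq_zero_of_not_summable h] at hp1
  have hdom := summable_add_one_rpow_mul hα hp hP hmom
  have hmean : Summable fun n : ℕ => (n : ℝ) * p n :=
    .of_nonneg_of_le (fun n => mul_nonneg n.cast_nonneg (hp n))
      (fun n => mul_le_mul_of_nonneg_right
        ((le_add_of_nonneg_right zero_le_one).trans
          (Real.self_le_rpow_of_one_le (by simp) hα)) (hp n)) hdom
  have hlim : ∑' n : ℕ, p n * (α * ((n : ℝ) - 1)) = α * (∑' n : ℕ, (n : ℝ) * p n - 1) := by
    simp_rw [show ∀ n : ℕ, p n * (α * ((n : ℝ) - 1)) = α * ((n : ℝ) * p n - p n) from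
      fun n => by ring]
    rw [tsum_mul_left, hmean.tsum_sub hP, hp1]
  rw [← hlim]
  have hterm (x : ℕ) : galtonWatsonGenerator p (· ^ α) x / (x : ℝ) ^ α =
      ∑' n : ℕ, p n * ((x : ℝ) * (((x : ℝ) + ((n : ℝ) - 1)) ^ α - (x : ℝ) ^ α) / (x : ℝ) ^ α) := by
    simp_rw [galtonWatsonGenerator, ← tsum_mul_left, ← tsum_div_const, add_sub_assoc]
    congr 1 with n
    ring
  simp_rw [hterm]
  refine tendsto_tsum_of_dominated_convergence (hdom.mul_left α) (fun n => ?_) ?_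
  · exact ((tendsto_mul_rpow_add_sub_rpow_div_rpow α _).comp
      tendsto_natCast_atTop_atTop).const_mul (p n)
  · filter_upwards [eventually_ge_atTop 1] with x hx n
    have hx1 : (1 : ℝ) ≤ x := by exact_mod_cast hx
    have hV : 0 < (x : ℝ) ^ α := Real.rpow_pos_of_pos (by linarith) α
    rw [← add_sub_assoc, Real.norm_eq_abs, abs_mul, abs_div, abs_mul, abs_of_nonneg (hp n),
      abs_of_pos hV, abs_of_nonneg (by linarith : (0 : ℝ) ≤ x), ← mul_div_assoc,
      div_le_iff₀ hV]
    calc p n * ((x : ℝ) * |((x : ℝ) + n - 1) ^ α - (x : ℝ) ^ α|)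
        ≤ p n * (α * ((n : ℝ) + 1) ^ α * (x : ℝ) ^ α) :=
          mul_le_mul_of_nonneg_left
            (mul_abs_rpow_add_sub_one_sub_rpow_le hα hx1 n.cast_nonneg) (hp n)
      _ = α * (((n : ℝ) + 1) ^ α * p n) * (x : ℝ) ^ α := by ring

lemma exists_le_neg_mul_add_of_tendsto_div {f g : ℕ → ℝ} {L lam : ℝ}
    (hfg : Tendsto (fun x => f x / g x) atTop (𝓝 L)) (hg : ∀ᶠ x in atTop, 0 < g x)
    (hL : L < -lam) : ∃ C, 0 ≤ C ∧ ∀ x, f x ≤ -lam * g x + C := by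
  have hev : ∀ᶠ x in atTop, f x + lam * g x ≤ 0 := by
    filter_upwards [hfg.eventually (gt_mem_nhds hL), hg] with x hx hgx
    rw [div_lt_iff₀ hgx] at hx
    linarith
  obtain ⟨C, hC⟩ := (isBoundedUnder_of_eventually_le hev).bddAbove_range
  exact ⟨max C 0, le_max_right _ _, fun x => by
    linarith [hC (mem_range_self x), le_max_left C 0]⟩

theorem galton_watson_lyapunov_drift_general
    (p : ℕ → ℝ) (hp : ∀ n, 0 ≤ p n) (hp1 : ∑' n, p n = 1)
    (m : ℝ) (hm : m = ∑' n : ℕ, (n : ℝ) * p n)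
    (α : ℝ) (hα : 1 < α)
    (hmom : Summable (fun n : ℕ => (n : ℝ) ^ α * p n))
    (hαm : p 0 < α * (1 - m)) :
    ∃ lam C : ℝ, p 0 < lam ∧ 0 ≤ C ∧
      ∀ x : ℕ, 1 ≤ x →
        (x : ℝ) * ∑' n : ℕ, p n * (((x : ℝ) + (n : ℝ) - 1) ^ α - (x : ℝ) ^ α)
          ≤ -lam * (x : ℝ) ^ α + C := by
  have hdrift := tendsto_galtonWatsonGenerator_rpow_div_rpow hα.le hp hp1 hmom
  rw [← hm] at hdrift
  have hV : ∀ᶠ x : ℕ in atTop, 0 < (x : ℝ) ^ α := (eventually_ge_atTop 1).mono fun x hx =>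
    Real.rpow_pos_of_pos (by exact_mod_cast hx) α
  obtain ⟨C, hC0, hC⟩ := exists_le_neg_mul_add_of_tendsto_div
    (lam := (p 0 + α * (1 - m)) / 2) hdrift hV (by linarith)
  exact ⟨_, C, by linarith, hC0, fun x _ => hC x⟩

/-- For a subcritical continuous-time Galton–Watson process with reproduction law `p`
(mean `m ∈ (0,1)`) admitting a finite `α`-moment with `α (1-m) > p(0)`, the Lyapunov
function `V(x) = x^α` satisfies the drift inequality `LV ≤ -λ₁ V + C` for some
`λ₁ > p(0)` and `C ≥ 0`. -/
theorem galton_watson_lyapunov_drift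
    (p : ℕ → ℝ) (hp : ∀ n, 0 ≤ p n) (hp1 : ∑' n, p n = 1)
    (m : ℝ) (hm : m = ∑' n : ℕ, (n : ℝ) * p n) (hm0 : 0 < m) (hm1 : m < 1)
    (α : ℝ) (hα : 1 < α)
    (hmom : Summable (fun n : ℕ => (n : ℝ) ^ α * p n))
    (hαm : p 0 < α * (1 - m)) :
    ∃ lam C : ℝ, p 0 < lam ∧ 0 ≤ C ∧
      ∀ x : ℕ, 1 ≤ x →
        (x : ℝ) * ∑' n : ℕ, p n * (((x : ℝ) + (n : ℝ) - 1) ^ α - (x : ℝ) ^ α)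
          ≤ -lam * (x : ℝ) ^ α + C :=
  galton_watson_lyapunov_drift_general p hp hp1 m hm α hα hmom hαm
end

section
/- Let p be a probability distribution on ℕ with finite mean m = ∑_{n≥0} n p(n), and let α ∈ (1,2] be such that ∑_{n≥0} n^α p(n) < ∞. Then there exists a constant C ≥ 0 such that for every integer x ≥ 1: x · ∑_{n=0}^∞ p(n) [ (x+n−1)^α − x^α ] ≤ α(m−1) x^α + C x. That is, for the Lyapunov function V(x) = x^α and the linear function φ(x) = x one has LV(x) ≤ α(m−1) V(x) + C φ(x) for all x ≥ 1. -/
/-!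
With `y = x + n - 1`, write `y ^ α - x ^ α` as its first-order Taylor term
`α x ^ (α - 1) (n - 1)` plus a remainder. Averaged against `p`, the Taylor terms give
`α x ^ (α - 1) (m - 1)`, which becomes `α (m - 1) x ^ α` after multiplication by `x`. The
remainder is bounded by `α |n - 1| ^ α ≤ α (1 + n ^ α)`, uniformly in `x`, because
`b ^ α - a ^ α ≤ α b ^ (α - 1) (b - a)` by convexity, and `t ↦ t ^ (α - 1)` is
`(α - 1)`-Hölder for `α ≤ 2`; so its average is at most `C = α (1 + ∑ n ^ α p n)`.
-/

namespace Real

theorem rpow_tangent_le {α a b : ℝ} (hα : 1 ≤ α) (ha : 0 ≤ a) (hb : 0 ≤ b) :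
    a ^ α + α * a ^ (α - 1) * (b - a) ≤ b ^ α := by
  rcases hα.eq_or_lt with rfl | hα
  · simp
  rcases ha.eq_or_lt with rfl | ha
  · simp [zero_rpow (by linarith : α ≠ 0), zero_rpow (by linarith : α - 1 ≠ 0),
      rpow_nonneg hb]
  -- Bernoulli's inequality for `(b / a) ^ α = (1 + (b - a) / a) ^ α`, scaled by `a ^ α`.
  have bernoulli := one_add_mul_self_le_rpow_one_add
    (by rw [le_div_iff₀ ha]; linarith : -1 ≤ (b - a) / a) hα.le
  rw [show 1 + (b - a) / a = b / a by field_simp; ring, div_rpow hb ha.le,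
    le_div_iff₀ (rpow_pos_of_pos ha α)] at bernoulli
  have hpow : a ^ (α - 1) = a ^ α / a := rpow_sub_one ha.ne' α
  rw [hpow]
  field_simp at bernoulli ⊢
  linarith

theorem rpow_sub_rpow_mul_sub_le_abs_rpow {β a b : ℝ} (hβ0 : 0 ≤ β) (hβ1 : β ≤ 1)
    (ha : 0 ≤ a) (hb : 0 ≤ b) :
    (b ^ β - a ^ β) * (b - a) ≤ |b - a| ^ (β + 1) := by
  wlog hab : a ≤ b generalizing a b
  · have := this hb ha (le_of_not_ge hab)
    rwa [abs_sub_comm, show (a ^ β - b ^ β) * (a - b) = (b ^ β - a ^ β) * (b - a) by ring]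
      at this
  have hsub : b ^ β ≤ a ^ β + (b - a) ^ β := by
    simpa using rpow_add_le_add_rpow ha (sub_nonneg.2 hab) hβ0 hβ1
  rw [abs_of_nonneg (sub_nonneg.2 hab), rpow_add_one' (sub_nonneg.2 hab) (by linarith)]
  exact mul_le_mul_of_nonneg_right (by linarith) (sub_nonneg.2 hab)

theorem rpow_sub_rpow_sub_mul_le {α a b : ℝ} (hα1 : 1 ≤ α) (hα2 : α ≤ 2) (ha : 0 ≤ a)
    (hb : 0 ≤ b) :
    b ^ α - a ^ α - α * a ^ (α - 1) * (b - a) ≤ α * |b - a| ^ α := by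
  have tangent_at_b := rpow_tangent_le hα1 hb ha
  have holder := rpow_sub_rpow_mul_sub_le_abs_rpow (β := α - 1) (by linarith) (by linarith) ha hb
  rw [sub_add_cancel] at holder
  nlinarith

theorem abs_sub_one_rpow_le_one_add_rpow {α t : ℝ} (hα : 0 ≤ α) (ht : 0 ≤ t) :
    |t - 1| ^ α ≤ 1 + t ^ α := by
  rcases le_total t 1 with ht1 | ht1
  · have : |t - 1| ^ α ≤ 1 :=
      rpow_le_one (abs_nonneg _) (by rw [abs_le]; constructor <;> linarith) hα
    linarith [rpow_nonneg ht α]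
  · have : |t - 1| ^ α ≤ t ^ α :=
      rpow_le_rpow (abs_nonneg _) (by rw [abs_of_nonneg (by linarith)]; linarith) hα
    linarith

theorem self_le_one_add_rpow {α t : ℝ} (hα : 1 ≤ α) (ht : 0 ≤ t) : t ≤ 1 + t ^ α := by
  rcases le_total t 1 with ht1 | ht1
  · linarith [rpow_nonneg ht α]
  · linarith [self_le_rpow_of_one_le ht1 hα]

end Real

open Real

section Moments

variable {p : ℕ → ℝ} {α : ℝ}

theorem summable_natCast_mul_of_summable_rpow_mul (hp : ∀ n, 0 ≤ p n) (hps : Summable p)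
    (hα : 1 ≤ α) (hmom : Summable fun n : ℕ => (n : ℝ) ^ α * p n) :
    Summable fun n : ℕ => (n : ℝ) * p n :=
  (hps.add hmom).of_nonneg_of_le (fun n => mul_nonneg n.cast_nonneg (hp n)) fun n => by
    simpa only [add_mul, one_mul] using
      mul_le_mul_of_nonneg_right (self_le_one_add_rpow hα n.cast_nonneg) (hp n)

theorem tsum_mul_rpow_sub_rpow_le (hp : ∀ n, 0 ≤ p n) (hp1 : ∑' n, p n = 1) (hα : 1 ≤ α)
    (hα2 : α ≤ 2) (hmom : Summable fun n : ℕ => (n : ℝ) ^ α * p n) {x : ℝ}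
    (hx : 1 ≤ x) :
    ∑' n : ℕ, p n * ((x + n - 1) ^ α - x ^ α)
      ≤ α * x ^ (α - 1) * (∑' n : ℕ, (n : ℝ) * p n - 1)
        + α * (1 + ∑' n : ℕ, (n : ℝ) ^ α * p n) := by
  have hps : Summable p := by
    by_contra h
    simp [tsum_eq_zero_of_not_summable h] at hp1
  have hmean := summable_natCast_mul_of_summable_rpow_mul hp hps hα hmom
  have hy (n : ℕ) : 0 ≤ x + n - 1 := by linarith [n.cast_nonneg (α := ℝ)]
  set r : ℕ → ℝ := fun n => (x + n - 1) ^ α - x ^ α - α * x ^ (α - 1) * (n - 1) with hr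
  have hr_nonneg (n : ℕ) : 0 ≤ r n := by
    have := rpow_tangent_le hα (by linarith) (hy n)
    rw [hr]; linarith
  have hr_le (n : ℕ) : r n ≤ α * (1 + (n : ℝ) ^ α) :=
    calc r n ≤ α * |(n : ℝ) - 1| ^ α := by
          have h := rpow_sub_rpow_sub_mul_le hα hα2 (by linarith) (hy n)
          rwa [show x + n - 1 - x = (n : ℝ) - 1 by ring] at h
      _ ≤ α * (1 + (n : ℝ) ^ α) := by
          gcongr; exact abs_sub_one_rpow_le_one_add_rpow (by linarith) n.cast_nonneg
  have hpr_le (n : ℕ) : p n * r n ≤ α * (p n + (n : ℝ) ^ α * p n) :=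
    (mul_le_mul_of_nonneg_left (hr_le n) (hp n)).trans_eq (by ring)
  have hr_summable : Summable fun n => p n * r n :=
    ((hps.add hmom).mul_left α).of_nonneg_of_le (fun n => mul_nonneg (hp n) (hr_nonneg n))
      hpr_le
  have hsplit : (fun n : ℕ => p n * ((x + n - 1) ^ α - x ^ α))
      = fun n => p n * r n + α * x ^ (α - 1) * ((n : ℝ) * p n - p n) := by
    funext n; rw [hr]; ring
  have hr_tsum : ∑' n, p n * r n ≤ α * (1 + ∑' n : ℕ, (n : ℝ) ^ α * p n) := by
    rw [← hp1, ← hps.tsum_add hmom, ← tsum_mul_left]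
    exact hr_summable.tsum_le_tsum hpr_le ((hps.add hmom).mul_left α)
  rw [hsplit, hr_summable.tsum_add ((hmean.sub hps).mul_left _), tsum_mul_left,
    hmean.tsum_sub hps, hp1]
  linarith

end Moments

/-- For a continuous-time Galton–Watson process with reproduction law `p` of finite mean `m`
and finite `α`-moment, `α ∈ (1,2]`, the Lyapunov function `V(x) = x^α` and the linear
function `φ(x) = x` satisfy `LV(x) ≤ α (m-1) V(x) + C φ(x)` for all `x ≥ 1`. -/
theorem galton_watson_drift_linear_error
    (p : ℕ → ℝ) (hp : ∀ n, 0 ≤ p n) (hp1 : ∑' n, p n = 1)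
    (m : ℝ) (hm : m = ∑' n : ℕ, (n : ℝ) * p n)
    (α : ℝ) (hα : 1 < α) (hα2 : α ≤ 2)
    (hmom : Summable (fun n : ℕ => (n : ℝ) ^ α * p n)) :
    ∃ C : ℝ, 0 ≤ C ∧
      ∀ x : ℕ, 1 ≤ x →
        (x : ℝ) * ∑' n : ℕ, p n * (((x : ℝ) + (n : ℝ) - 1) ^ α - (x : ℝ) ^ α)
          ≤ α * (m - 1) * (x : ℝ) ^ α + C * (x : ℝ) := by
  set M := ∑' n : ℕ, (n : ℝ) ^ α * p n
  have hM : 0 ≤ M := tsum_nonneg fun n => mul_nonneg (rpow_nonneg n.cast_nonneg α) (hp n)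
  refine ⟨α * (1 + M), by positivity, fun x hx => ?_⟩
  have hx1 : (1 : ℝ) ≤ x := by exact_mod_cast hx
  have hx0 : (x : ℝ) ≠ 0 := (zero_lt_one.trans_le hx1).ne'
  have hpow : (x : ℝ) * (x : ℝ) ^ (α - 1) = (x : ℝ) ^ α := by
    rw [rpow_sub_one hx0, mul_div_cancel₀ _ hx0]
  calc (x : ℝ) * ∑' n : ℕ, p n * (((x : ℝ) + (n : ℝ) - 1) ^ α - (x : ℝ) ^ α)
      ≤ x * (α * x ^ (α - 1) * (m - 1) + α * (1 + M)) := by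
        rw [hm]
        exact mul_le_mul_of_nonneg_left (tsum_mul_rpow_sub_rpow_le hp hp1 hα.le hα2 hmom hx1)
          (by positivity)
    _ = α * (m - 1) * (x : ℝ) ^ α + α * (1 + M) * x := by rw [← hpow]; ring
end

section
/- Let d ≥ 1, let λ_1,…,λ_d > 0, let p_1,…,p_d be probability distributions on ℤ_+^d, and let α > 1 be such that ∑_{n∈ℤ_+^d} |n|^α p_i(n) < ∞ for every i. Define M_{ij} = λ_i ∑_{n∈ℤ_+^d} n_j p_i(n) and Q_{ij} = M_{ij} − δ_{ij} λ_i. Suppose v ∈ (0,∞)^d and ρ ∈ ℝ satisfy Q v = ρ v (i.e., ∑_j Q_{ij} v_j = ρ v_i for all i). Then, writing ⟨v,x⟩ = ∑_j v_j x_j, the quantity G(x) = ∑_{i : x_i ≥ 1} λ_i x_i ∑_{n∈ℤ_+^d} p_i(n) [ (⟨v,x⟩ + ⟨v,n⟩ − v_i)^α − ⟨v,x⟩^α ], defined for x ∈ ℤ_+^d ∖ {0}, satisfies G(x)/⟨v,x⟩^α → α ρ as |x| → ∞ (x ranging over ℤ_+^d ∖ {0}). -/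
/-!
Write `s = ⟨v, x⟩`, `u = ⟨v, n⟩ - v i` and `φ(t) = (1 + t) ^ α - 1 - α t`, so that
`(s + u) ^ α - s ^ α = s ^ (α - 1) (α u + s φ(u / s))`. The linear parts average, through
`Q v = ρ v`, to exactly `α ρ s ^ α`. Since `φ(t) = o(t)` at `0`, `s φ(u / s) → 0` for each
fixed `u`, and `|s φ(u / s)| ≤ C (|u| + |u| ^ α)` for `s ≥ 1`, so by dominated convergence (the
`α`-moments) the averaged remainder tends to `0`. As `x i / s ≤ 1 / v i`, its share of
`G(x) / s ^ α` vanishes.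
-/

open Real Filter Topology Asymptotics Finset

noncomputable def rpowRem (α t : ℝ) : ℝ := (1 + t) ^ α - 1 - α * t

lemma rpowRem_nonneg {α t : ℝ} (hα : 1 ≤ α) (ht : -1 ≤ t) : 0 ≤ rpowRem α t := by
  have := one_add_mul_self_le_rpow_one_add ht hα
  unfold rpowRem; linarith

lemma le_one_add_rpow {x α : ℝ} (hx : 0 ≤ x) (hα : 1 ≤ α) : x ≤ 1 + x ^ α := by
  rcases le_total x 1 with h | h
  · linarith [rpow_nonneg hx α]
  · linarith [self_le_rpow_of_one_le h hα]

lemma one_add_rpow_le_of_le_one {α t : ℝ} (hα : 1 ≤ α) (ht₀ : 0 ≤ t) (ht₁ : t ≤ 1) :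
    (1 + t) ^ α ≤ 1 + (2 ^ α - 1) * t := by
  have h := (convexOn_rpow hα).2 (show (1 : ℝ) ∈ Set.Ici 0 by norm_num)
    (show (2 : ℝ) ∈ Set.Ici 0 by norm_num) (by linarith : (0 : ℝ) ≤ 1 - t) ht₀ (by ring)
  simp only [smul_eq_mul, one_rpow] at h
  calc (1 + t) ^ α = ((1 - t) * 1 + t * 2) ^ α := by ring_nf
    _ ≤ (1 - t) * 1 + t * 2 ^ α := h
    _ = 1 + (2 ^ α - 1) * t := by ring

lemma rpowRem_le {α t : ℝ} (hα : 1 ≤ α) (ht : -1 ≤ t) :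
    rpowRem α t ≤ (α + 2 ^ α) * (|t| + |t| ^ α) := by
  have h2α : 0 ≤ (2 : ℝ) ^ α := by positivity
  have hrest : 0 ≤ (α + 2 ^ α) * |t| ^ α := by positivity
  unfold rpowRem
  rw [mul_add]
  rcases le_total t 0 with h0 | h0
  · have : (1 + t) ^ α ≤ 1 := rpow_le_one (by linarith) (by linarith) (by linarith)
    rw [abs_of_nonpos h0] at hrest ⊢
    nlinarith
  rw [abs_of_nonneg h0] at hrest ⊢
  rcases le_total t 1 with h1 | h1
  · nlinarith [one_add_rpow_le_of_le_one hα h0 h1]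
  · have : (1 + t) ^ α ≤ 2 ^ α * t ^ α := by
      rw [← mul_rpow (by norm_num) h0]
      exact rpow_le_rpow (by linarith) (by linarith) (by linarith)
    nlinarith [mul_nonneg (by linarith : (0:ℝ) ≤ α) (rpow_nonneg h0 α)]

lemma abs_rpowRem_le {α t : ℝ} (hα : 1 ≤ α) (ht : -1 ≤ t) :
    |rpowRem α t| ≤ (α + 2 ^ α) * (|t| + |t| ^ α) := by
  rw [abs_of_nonneg (rpowRem_nonneg hα ht)]
  exact rpowRem_le hα ht

lemma isLittleO_rpowRem (α : ℝ) : rpowRem α =o[𝓝 0] id := by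
  have h : HasDerivAt (fun t : ℝ => (1 + t) ^ α) α 0 := by
    simpa using ((hasDerivAt_id (0 : ℝ)).const_add 1).rpow_const (p := α) (by simp)
  rw [hasDerivAt_iff_isLittleO] at h
  simp only [add_zero, one_rpow, sub_zero, smul_eq_mul] at h
  exact h.congr_left fun t => by rw [rpowRem, mul_comm]

lemma tendsto_mul_rpowRem_div_atTop (α u : ℝ) :
    Tendsto (fun s => s * rpowRem α (u / s)) atTop (𝓝 0) := by
  have hu : Tendsto (fun s : ℝ => u / s) atTop (𝓝 0) := tendsto_const_nhds.div_atTop tendsto_id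
  have h := ((isLittleO_rpowRem α).comp_tendsto hu).mul_isBigO (isBigO_refl (fun s : ℝ => s) atTop)
  have h' : (fun s : ℝ => s * rpowRem α (u / s)) =o[atTop] fun _ => (1 : ℝ) := by
    refine (h.congr' (Eventually.of_forall fun s => mul_comm _ _) ?_).trans_isBigO
      (isBigO_const_one ℝ u atTop)
    filter_upwards [eventually_ne_atTop 0] with s hs
    simp [div_mul_cancel₀ u hs]
  exact (isLittleO_one_iff ℝ).mp h'

lemma abs_mul_rpowRem_div_le {α s u : ℝ} (hα : 1 ≤ α) (hs : 1 ≤ s) (hu : -s ≤ u) :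
    |s * rpowRem α (u / s)| ≤ (α + 2 ^ α) * (|u| + |u| ^ α) := by
  have hs0 : 0 < s := by linarith
  have ht : -1 ≤ u / s := by rw [le_div_iff₀ hs0]; linarith
  have hsα : s * |u / s| ^ α ≤ |u| ^ α := by
    rw [abs_div, abs_of_pos hs0, div_rpow (abs_nonneg u) hs0.le, mul_div_left_comm]
    refine mul_le_of_le_one_right (by positivity) ?_
    rw [div_le_one (by positivity)]
    exact self_le_rpow_of_one_le hs hα
  have hs1 : s * |u / s| = |u| := by
    rw [abs_div, abs_of_pos hs0, mul_div_cancel₀ _ hs0.ne']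
  calc |s * rpowRem α (u / s)| = s * |rpowRem α (u / s)| := by rw [abs_mul, abs_of_pos hs0]
    _ ≤ s * ((α + 2 ^ α) * (|u / s| + |u / s| ^ α)) := by gcongr; exact abs_rpowRem_le hα ht
    _ = (α + 2 ^ α) * (s * |u / s| + s * |u / s| ^ α) := by ring
    _ ≤ (α + 2 ^ α) * (|u| + |u| ^ α) := by rw [hs1]; gcongr

lemma norm_mul_mul_rpowRem_div_le {α s u p : ℝ} (hα : 1 ≤ α) (hs : 1 ≤ s) (hu : -s ≤ u)
    (hp : 0 ≤ p) :
    ‖p * (s * rpowRem α (u / s))‖ ≤ (α + 2 ^ α) * (p * (|u| + |u| ^ α)) := by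
  rw [Real.norm_eq_abs, abs_mul, abs_of_nonneg hp, mul_left_comm]
  exact mul_le_mul_of_nonneg_left (abs_mul_rpowRem_div_le hα hs hu) hp

section Weighted

variable {ι : Type*} {α : ℝ} {p u : ι → ℝ}

lemma tendsto_tsum_mul_mul_rpowRem_div (hα : 1 ≤ α) (hp : ∀ n, 0 ≤ p n) {b : ℝ}
    (hu : ∀ n, -b ≤ u n) (hsum : Summable fun n => p n * (|u n| + |u n| ^ α)) :
    Tendsto (fun s => ∑' n, p n * (s * rpowRem α (u n / s))) atTop (𝓝 0) := by
  have h := tendsto_tsum_of_dominated_convergence (hsum.mul_left (α + 2 ^ α))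
    (fun n => ((tendsto_mul_rpowRem_div_atTop α (u n)).const_mul (p n)))
    (by
      filter_upwards [eventually_ge_atTop (max 1 b)] with s hs n
      exact norm_mul_mul_rpowRem_div_le hα (le_of_max_le_left hs)
        (by linarith [le_of_max_le_right hs, hu n]) (hp n))
  simpa using h

lemma tsum_mul_rpow_add_sub_rpow {s : ℝ} (hα : 1 ≤ α) (hs : 1 ≤ s) (hp : ∀ n, 0 ≤ p n)
    (hu : ∀ n, -s ≤ u n) (hsum : Summable fun n => p n * (|u n| + |u n| ^ α)) :
    ∑' n, p n * ((s + u n) ^ α - s ^ α)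
      = s ^ (α - 1) * (α * ∑' n, p n * u n + ∑' n, p n * (s * rpowRem α (u n / s))) := by
  have hs0 : 0 < s := by linarith
  have hlin : Summable fun n => p n * u n :=
    hsum.of_norm_bounded fun n => by
      rw [Real.norm_eq_abs, abs_mul, abs_of_nonneg (hp n)]
      exact mul_le_mul_of_nonneg_left (le_add_of_nonneg_right (by positivity)) (hp n)
  have hrem : Summable fun n => p n * (s * rpowRem α (u n / s)) :=
    (hsum.mul_left (α + 2 ^ α)).of_norm_bounded fun n =>
      norm_mul_mul_rpowRem_div_le hα hs (hu n) (hp n)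
  have hpoint : ∀ n, p n * ((s + u n) ^ α - s ^ α)
      = s ^ (α - 1) * (α * (p n * u n) + p n * (s * rpowRem α (u n / s))) := by
    intro n
    have hsplit : s + u n = s * (1 + u n / s) := by field_simp
    have ht : 0 ≤ 1 + u n / s := by
      have : -1 ≤ u n / s := by rw [le_div_iff₀ hs0]; linarith [hu n]
      linarith
    rw [hsplit, mul_rpow hs0.le ht, rpowRem, rpow_sub_one hs0.ne']
    field_simp
    ring
  rw [tsum_congr hpoint, tsum_mul_left, (hlin.mul_left α).tsum_add hrem, tsum_mul_left]

lemma summable_mul_abs_add_abs_rpow {N : ι → ℝ} {c b : ℝ} (hα : 1 ≤ α) (hp : ∀ n, 0 ≤ p n)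
    (hp1 : Summable p) (hmom : Summable fun n => N n ^ α * p n) (hN : ∀ n, 0 ≤ N n)
    (hc : 0 ≤ c) (hb : 0 ≤ b) (hu : ∀ n, |u n| ≤ max (c * N n) b) :
    Summable fun n => p n * (|u n| + |u n| ^ α) := by
  have hα0 : 0 ≤ α := by linarith
  have hrpow : ∀ n, |u n| ^ α ≤ c ^ α * N n ^ α + b ^ α := by
    intro n
    calc |u n| ^ α ≤ (max (c * N n) b) ^ α := rpow_le_rpow (abs_nonneg _) (hu n) hα0
      _ = max (c ^ α * N n ^ α) (b ^ α) := by
        rw [rpow_max (mul_nonneg hc (hN n)) hb hα0, mul_rpow hc (hN n)]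
      _ ≤ c ^ α * N n ^ α + b ^ α := max_le_add_of_nonneg
        (mul_nonneg (rpow_nonneg hc α) (rpow_nonneg (hN n) α)) (rpow_nonneg hb α)
  refine Summable.of_nonneg_of_le (fun n => mul_nonneg (hp n) (by positivity)) (fun n => ?_)
    (hp1.add ((((hmom.mul_left (c ^ α)).add (hp1.mul_left (b ^ α)))).mul_left 2))
  nlinarith [le_one_add_rpow (abs_nonneg (u n)) hα, mul_le_mul_of_nonneg_left (hrpow n) (hp n),
    hp n]

end Weighted

namespace GaltonWatson

variable {d : ℕ}

noncomputable def pairing (v : Fin d → ℝ) (x : Fin d → ℕ) : ℝ := ∑ j, v j * (x j : ℝ)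

/-- The displacement of `⟨v, ·⟩` when an individual of type `i` is replaced by its progeny `n`. -/
noncomputable def jump (v : Fin d → ℝ) (i : Fin d) (n : Fin d → ℕ) : ℝ := pairing v n - v i

/-- The generator of the process applied to `V = ⟨v, ·⟩ ^ α`. -/
noncomputable def generatorPow (lam : Fin d → ℝ) (p : Fin d → (Fin d → ℕ) → ℝ) (v : Fin d → ℝ)
    (α : ℝ) (x : Fin d → ℕ) : ℝ :=
  ∑ i ∈ univ.filter (fun i => 1 ≤ x i), lam i * (x i : ℝ) *
    ∑' n, p i n * ((pairing v x + pairing v n - v i) ^ α - pairing v x ^ α)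

variable {lam : Fin d → ℝ} {p : Fin d → (Fin d → ℕ) → ℝ} {v : Fin d → ℝ} {α ρ : ℝ} {i : Fin d}

lemma pairing_nonneg (hv : ∀ j, 0 ≤ v j) (x : Fin d → ℕ) : 0 ≤ pairing v x :=
  sum_nonneg fun j _ => mul_nonneg (hv j) (Nat.cast_nonneg _)

lemma mul_le_pairing (hv : ∀ j, 0 ≤ v j) (x : Fin d → ℕ) (i : Fin d) :
    v i * x i ≤ pairing v x :=
  single_le_sum (f := fun j => v j * (x j : ℝ)) (fun j _ => mul_nonneg (hv j) (Nat.cast_nonneg _))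
    (mem_univ i)

lemma pairing_le_sum_mul (hv : ∀ j, 0 ≤ v j) (x : Fin d → ℕ) :
    pairing v x ≤ (∑ j, v j) * ∑ j, (x j : ℝ) := by
  rw [pairing, sum_mul_sum]
  exact sum_le_sum fun j _ => single_le_sum (f := fun k => v j * (x k : ℝ))
    (fun k _ => mul_nonneg (hv j) (Nat.cast_nonneg _)) (mem_univ j)

lemma sum_le_mul_pairing (hv : ∀ j, 0 < v j) (x : Fin d → ℕ) :
    ∑ j, (x j : ℝ) ≤ (∑ j, (v j)⁻¹) * pairing v x := by
  rw [pairing, sum_mul_sum]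
  refine sum_le_sum fun j _ => ?_
  calc (x j : ℝ) = (v j)⁻¹ * (v j * x j) := by field_simp [(hv j).ne']
    _ ≤ ∑ k, (v j)⁻¹ * (v k * x k) :=
      single_le_sum (f := fun k => (v j)⁻¹ * (v k * (x k : ℝ)))
        (fun k _ => mul_nonneg (inv_nonneg.2 (hv j).le) (mul_nonneg (hv k).le (Nat.cast_nonneg _)))
        (mem_univ j)

lemma neg_le_jump (hv : ∀ j, 0 ≤ v j) (i : Fin d) (n : Fin d → ℕ) : -v i ≤ jump v i n := by
  have := pairing_nonneg hv n
  rw [jump]; linarith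

lemma abs_jump_le (hv : ∀ j, 0 ≤ v j) (i : Fin d) (n : Fin d → ℕ) :
    |jump v i n| ≤ max ((∑ j, v j) * ∑ j, (n j : ℝ)) (v i) := by
  have h₀ := pairing_nonneg hv n
  have h₁ := pairing_le_sum_mul hv n
  rw [jump, abs_le]
  constructor <;> linarith [hv i, le_max_left ((∑ j, v j) * ∑ j, (n j : ℝ)) (v i),
    le_max_right ((∑ j, v j) * ∑ j, (n j : ℝ)) (v i)]

lemma summable_mul_abs_jump_add (hα : 1 ≤ α) (hp : ∀ n, 0 ≤ p i n) (hp1 : Summable (p i))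
    (hmom : Summable fun n : Fin d → ℕ => (∑ j, (n j : ℝ)) ^ α * p i n) (hv : ∀ j, 0 ≤ v j) :
    Summable fun n => p i n * (|jump v i n| + |jump v i n| ^ α) :=
  summable_mul_abs_add_abs_rpow hα hp hp1 hmom
    (fun _ => sum_nonneg fun _ _ => Nat.cast_nonneg _) (sum_nonneg fun j _ => hv j) (hv i)
    (abs_jump_le hv i)

lemma summable_coord_mul (hα : 1 ≤ α) (hp : ∀ n, 0 ≤ p i n) (hp1 : Summable (p i))
    (hmom : Summable fun n : Fin d → ℕ => (∑ j, (n j : ℝ)) ^ α * p i n) (j : Fin d) :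
    Summable fun n : Fin d → ℕ => (n j : ℝ) * p i n := by
  refine Summable.of_nonneg_of_le (fun n => mul_nonneg (Nat.cast_nonneg _) (hp n)) (fun n => ?_)
    (hp1.add hmom)
  have hN : (n j : ℝ) ≤ ∑ k, (n k : ℝ) :=
    single_le_sum (f := fun k => (n k : ℝ)) (fun _ _ => Nat.cast_nonneg _) (mem_univ j)
  have hN0 : 0 ≤ ∑ k, (n k : ℝ) := by positivity
  nlinarith [le_one_add_rpow hN0 hα, hp n]

lemma mul_tsum_mul_jump (hpsum : Summable (p i)) (hp1 : ∑' n, p i n = 1)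
    (hsum : ∀ j, Summable fun n : Fin d → ℕ => (n j : ℝ) * p i n)
    (hQv : ∑ j, ((lam i * ∑' n : Fin d → ℕ, (n j : ℝ) * p i n)
      - (if i = j then lam i else 0)) * v j = ρ * v i) :
    lam i * ∑' n, p i n * jump v i n = ρ * v i := by
  have hterm : ∀ n, p i n * pairing v n = ∑ j, v j * ((n j : ℝ) * p i n) := fun n => by
    rw [pairing, mul_sum]
    exact sum_congr rfl fun j _ => by ring
  have hsum' : ∀ j ∈ univ, Summable fun n : Fin d → ℕ => v j * ((n j : ℝ) * p i n) :=
    fun j _ => (hsum j).mul_left (v j)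
  have hmean : ∑' n, p i n * pairing v n = ∑ j, v j * ∑' n, (n j : ℝ) * p i n := by
    simp_rw [hterm, Summable.tsum_finsetSum hsum', tsum_mul_left]
  simp only [jump, mul_sub]
  rw [Summable.tsum_sub ?_ (hpsum.mul_right (v i)), tsum_mul_right, hp1, hmean, ← hQv]
  · simp only [sub_mul, ite_mul, zero_mul, sum_sub_distrib, sum_ite_eq, mem_univ, if_true]
    rw [one_mul, mul_sub, mul_sum]
    exact congrArg (· - _) (sum_congr rfl fun j _ => by ring)
  · simp_rw [hterm]
    exact summable_sum hsum'


noncomputable def meanRemainder (p : Fin d → (Fin d → ℕ) → ℝ) (v : Fin d → ℝ) (α : ℝ)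
    (i : Fin d) (s : ℝ) : ℝ :=
  ∑' n, p i n * (s * rpowRem α (jump v i n / s))

lemma tendsto_meanRemainder (hα : 1 ≤ α) (hp : ∀ i n, 0 ≤ p i n) (hv : ∀ j, 0 ≤ v j)
    (hsum : ∀ i, Summable fun n => p i n * (|jump v i n| + |jump v i n| ^ α)) (i : Fin d) :
    Tendsto (meanRemainder p v α i) atTop (𝓝 0) :=
  tendsto_tsum_mul_mul_rpowRem_div hα (hp i) (neg_le_jump hv i) (hsum i)

lemma generatorPow_div_rpow_sub (hα : 1 ≤ α) (hp : ∀ i n, 0 ≤ p i n) (hv : ∀ j, 0 ≤ v j)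
    (hsum : ∀ i, Summable fun n => p i n * (|jump v i n| + |jump v i n| ^ α))
    (hmean : ∀ i, lam i * ∑' n, p i n * jump v i n = ρ * v i)
    {x : Fin d → ℕ} (hx : 1 ≤ pairing v x) :
    generatorPow lam p v α x / pairing v x ^ α - α * ρ
      = ∑ i ∈ univ.filter (fun i => 1 ≤ x i),
          (x i : ℝ) / pairing v x * (lam i * meanRemainder p v α i (pairing v x)) := by
  set s := pairing v x
  set F := univ.filter (fun i => 1 ≤ x i)
  have hs0 : 0 < s := by linarith
  have hterm : ∀ i ∈ F, lam i * x i * ∑' n, p i n * ((s + pairing v n - v i) ^ α - s ^ α)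
      = s ^ (α - 1) * (α * ρ * (v i * x i) + x i * (lam i * meanRemainder p v α i s)) := by
    intro i hi
    have hvi : v i ≤ s := by
      have hxi : (1 : ℝ) ≤ x i := by exact_mod_cast (mem_filter.1 hi).2
      nlinarith [mul_le_pairing hv x i, hv i]
    have hjump : ∀ n, s + pairing v n - v i = s + jump v i n := fun n => add_sub_assoc _ _ _
    simp_rw [hjump]
    rw [tsum_mul_rpow_add_sub_rpow hα hx (hp i)
      (fun n => (neg_le_neg hvi).trans (neg_le_jump hv i n)) (hsum i), meanRemainder]
    linear_combination (s ^ (α - 1) * x i * α) * hmean i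
  have hsF : ∑ i ∈ F, v i * x i = s :=
    sum_filter_of_ne fun i _ h => Nat.one_le_iff_ne_zero.2 fun h0 => h (by simp [h0])
  have hpow : s ^ (α - 1) = s ^ α / s := rpow_sub_one hs0.ne' α
  have hsα : 0 < s ^ α := rpow_pos_of_pos hs0 α
  simp_rw [div_mul_eq_mul_div]
  rw [generatorPow, sum_congr rfl hterm, ← mul_sum, sum_add_distrib, ← mul_sum, hsF, hpow,
    ← sum_div]
  field_simp
  ring

lemma abs_generatorPow_div_rpow_sub_le (hα : 1 ≤ α) (hp : ∀ i n, 0 ≤ p i n) (hv : ∀ j, 0 < v j)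
    (hsum : ∀ i, Summable fun n => p i n * (|jump v i n| + |jump v i n| ^ α))
    (hmean : ∀ i, lam i * ∑' n, p i n * jump v i n = ρ * v i)
    {x : Fin d → ℕ} (hx : 1 ≤ pairing v x) :
    |generatorPow lam p v α x / pairing v x ^ α - α * ρ|
      ≤ ∑ i, |lam i| / v i * |meanRemainder p v α i (pairing v x)| := by
  have hs0 : 0 < pairing v x := by linarith
  rw [generatorPow_div_rpow_sub hα hp (fun j => (hv j).le) hsum hmean hx]
  refine (abs_sum_le_sum_abs _ _).trans ((sum_le_sum fun i _ => ?_).trans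
    (sum_le_sum_of_subset_of_nonneg (filter_subset _ _) fun i _ _ =>
      mul_nonneg (div_nonneg (abs_nonneg _) (hv i).le) (abs_nonneg _)))
  have hxi : (x i : ℝ) / pairing v x ≤ (v i)⁻¹ := by
    rw [div_le_iff₀ hs0, inv_mul_eq_div, le_div_iff₀ (hv i), mul_comm]
    exact mul_le_pairing (fun j => (hv j).le) x i
  calc |(x i : ℝ) / pairing v x * (lam i * meanRemainder p v α i (pairing v x))|
      = (x i : ℝ) / pairing v x * (|lam i| * |meanRemainder p v α i (pairing v x)|) := by
        rw [abs_mul, abs_mul, abs_of_nonneg (by positivity)]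
    _ ≤ (v i)⁻¹ * (|lam i| * |meanRemainder p v α i (pairing v x)|) := by gcongr
    _ = |lam i| / v i * |meanRemainder p v α i (pairing v x)| := by ring

end GaltonWatson

open GaltonWatson

theorem multitype_galton_watson_generator_asymptotics_general
    (d : ℕ)
    (lam : Fin d → ℝ)
    (p : Fin d → (Fin d → ℕ) → ℝ) (hp : ∀ i n, 0 ≤ p i n)
    (hp1 : ∀ i, ∑' n : Fin d → ℕ, p i n = 1)
    (α : ℝ) (hα : 1 < α)
    (hmom : ∀ i, Summable (fun n : Fin d → ℕ => (∑ j, (n j : ℝ)) ^ α * p i n))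
    (v : Fin d → ℝ) (hv : ∀ j, 0 < v j) (ρ : ℝ)
    (hQv : ∀ i, ∑ j,
        ((lam i * ∑' n : Fin d → ℕ, (n j : ℝ) * p i n)
          - (if i = j then lam i else 0)) * v j = ρ * v i) :
    ∀ ε > 0, ∃ R : ℕ, ∀ x : Fin d → ℕ, x ≠ 0 → R ≤ ∑ j, x j →
      |(∑ i ∈ Finset.univ.filter (fun i => 1 ≤ x i),
          lam i * (x i : ℝ) *
            ∑' n : Fin d → ℕ,
              p i n * (((∑ j, v j * (x j : ℝ)) + (∑ j, v j * (n j : ℝ)) - v i) ^ α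
                - (∑ j, v j * (x j : ℝ)) ^ α))
          / (∑ j, v j * (x j : ℝ)) ^ α
        - α * ρ| < ε := by
  intro ε hε
  have hpsum : ∀ i, Summable (p i) := fun i => by
    by_contra h
    simpa [tsum_eq_zero_of_not_summable h] using hp1 i
  have hsum i :=
    summable_mul_abs_jump_add hα.le (hp i) (hpsum i) (hmom i) (v := v) fun j => (hv j).le
  have hmean i := mul_tsum_mul_jump (lam := lam) (hpsum i) (hp1 i)
    (summable_coord_mul hα.le (hp i) (hpsum i) (hmom i)) (hQv i)
  have hlim : Tendsto (fun s => ∑ i, |lam i| / v i * |meanRemainder p v α i s|) atTop (𝓝 0) := by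
    simpa using tendsto_finsetSum univ fun i _ =>
      ((tendsto_meanRemainder hα.le hp (fun j => (hv j).le) hsum i).abs.const_mul (|lam i| / v i))
  obtain ⟨S, hS⟩ :=
    eventually_atTop.1 ((hlim.eventually (gt_mem_nhds hε)).and (eventually_ge_atTop 1))
  set c := ∑ j, (v j)⁻¹
  refine ⟨⌈c * S⌉₊ + 1, fun x _ hR => ?_⟩
  have hxS : S ≤ pairing v x := by
    have hR' : ((⌈c * S⌉₊ + 1 : ℕ) : ℝ) ≤ ∑ j, (x j : ℝ) := by exact_mod_cast hR
    have hc : 0 ≤ c := sum_nonneg fun j _ => inv_nonneg.2 (hv j).le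
    push_cast at hR'
    nlinarith [Nat.le_ceil (c * S), sum_le_mul_pairing hv x]
  exact (abs_generatorPow_div_rpow_sub_le hα.le hp hv hsum hmean (hS _ hxS).2).trans_lt (hS _ hxS).1

/-- For a multi-type continuous-time Galton–Watson process with reproduction rates `lam i`,
reproduction laws `p i` on `ℤ₊^d` with finite `α`-moments (`α > 1`), and a positive right
eigenvector `v` of the matrix `Q` with eigenvalue `ρ`, the generator applied to
`V(x) = ⟨v,x⟩^α`, divided by `⟨v,x⟩^α`, converges to `α ρ` as `|x| → ∞` over
`x ∈ ℤ₊^d \ {0}`. -/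
theorem multitype_galton_watson_generator_asymptotics
    (d : ℕ) (hd : 1 ≤ d)
    (lam : Fin d → ℝ) (hlam : ∀ i, 0 < lam i)
    (p : Fin d → (Fin d → ℕ) → ℝ) (hp : ∀ i n, 0 ≤ p i n)
    (hp1 : ∀ i, ∑' n : Fin d → ℕ, p i n = 1)
    (α : ℝ) (hα : 1 < α)
    (hmom : ∀ i, Summable (fun n : Fin d → ℕ => (∑ j, (n j : ℝ)) ^ α * p i n))
    (v : Fin d → ℝ) (hv : ∀ j, 0 < v j) (ρ : ℝ)
    (hQv : ∀ i, ∑ j,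
        ((lam i * ∑' n : Fin d → ℕ, (n j : ℝ) * p i n)
          - (if i = j then lam i else 0)) * v j = ρ * v i) :
    ∀ ε > 0, ∃ R : ℕ, ∀ x : Fin d → ℕ, x ≠ 0 → R ≤ ∑ j, x j →
      |(∑ i ∈ Finset.univ.filter (fun i => 1 ≤ x i),
          lam i * (x i : ℝ) *
            ∑' n : Fin d → ℕ,
              p i n * (((∑ j, v j * (x j : ℝ)) + (∑ j, v j * (n j : ℝ)) - v i) ^ α
                - (∑ j, v j * (x j : ℝ)) ^ α))
          / (∑ j, v j * (x j : ℝ)) ^ α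
        - α * ρ| < ε :=
  multitype_galton_watson_generator_asymptotics_general d lam p hp hp1 α hα hmom v hv ρ hQv
end

section
/- Let d ≥ 1, let λ_1,…,λ_d > 0, let p_1,…,p_d be probability distributions on ℤ_+^d, and let α > 1 be such that ∑_{n∈ℤ_+^d} |n|^α p_i(n) < ∞ for every i. Define M_{ij} = λ_i ∑_{n∈ℤ_+^d} n_j p_i(n) and Q_{ij} = M_{ij} − δ_{ij} λ_i, and suppose v ∈ (0,∞)^d and ρ < 0 satisfy Q v = ρ v. Then for every λ₁ ∈ (0, α(−ρ)) there exists a constant C ≥ 0 such that for all x ∈ ℤ_+^d ∖ {0}: ∑_{i : x_i ≥ 1} λ_i x_i ∑_{n∈ℤ_+^d} p_i(n) [ (⟨v,x⟩ + ⟨v,n⟩ − v_i)^α − ⟨v,x⟩^α ] ≤ −λ₁ ⟨v,x⟩^α + C. That is, V(x) = ⟨v,x⟩^α satisfies the Foster–Lyapunov drift inequality LV ≤ −λ₁ V + C. -/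
set_option maxHeartbeats 1600000
set_option linter.unusedSectionVars false
set_option linter.unusedVariables false

open Real


lemma gw_tangent {α : ℝ} (hα : 1 < α) {x y : ℝ} (hx : 0 ≤ x) (hy : 0 ≤ y) :
    x ^ α + α * x ^ (α - 1) * (y - x) ≤ y ^ α := by
  rcases eq_or_lt_of_le hx with h0 | hxpos
  · rw [← h0]
    rw [Real.zero_rpow (by linarith), Real.zero_rpow (by linarith : α - 1 ≠ 0)]
    simpa using Real.rpow_nonneg hy α
  · have hb : -1 ≤ y / x - 1 := by
      have : 0 ≤ y / x := div_nonneg hy hxpos.le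
      linarith
    have this1 := one_add_mul_self_le_rpow_one_add hb hα.le
    have h1 : (1 : ℝ) + (y / x - 1) = y / x := by ring
    rw [h1] at this1
    have h3 : x ^ α * (1 + α * (y / x - 1)) ≤ x ^ α * (y / x) ^ α :=
      mul_le_mul_of_nonneg_left this1 (Real.rpow_nonneg hx α)
    have h4 : x ^ α * (y / x) ^ α = y ^ α := by
      rw [← Real.mul_rpow hx (div_nonneg hy hx), mul_div_cancel₀ _ (ne_of_gt hxpos)]
    have h5 : x ^ α * (1 + α * (y / x - 1)) = x ^ α + α * x ^ (α - 1) * (y - x) := by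
      have hxa : x ^ α = x ^ (α - 1) * x := by
        rw [← Real.rpow_add_one (ne_of_gt hxpos)]; ring_nf
      rw [hxa]
      field_simp
    rw [h5, h4] at h3
    exact h3

lemma gw_lemS {α : ℝ} (hα : 1 < α) {ε : ℝ} (hε : 0 < ε) :
    ∃ C : ℝ, 0 ≤ C ∧ ∀ s : ℝ, 0 ≤ s → s ≤ ε * s ^ α + C := by
  set T : ℝ := (1 / ε) ^ (1 / (α - 1)) with hT
  have hT0 : 0 ≤ T := Real.rpow_nonneg (by positivity) _
  refine ⟨T, hT0, fun s hs => ?_⟩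
  rcases le_or_gt s T with h | h
  · have : 0 ≤ ε * s ^ α := by positivity
    linarith
  · have hspos : 0 < s := lt_of_le_of_lt hT0 h
    have h1 : (1 / ε) ≤ s ^ (α - 1) := by
      have h1a := Real.rpow_le_rpow hT0 h.le (by linarith : (0:ℝ) ≤ α - 1)
      rw [hT, ← Real.rpow_mul (by positivity), one_div (α - 1),
        inv_mul_cancel₀ (by linarith : α - 1 ≠ 0), Real.rpow_one] at h1a
      exact h1a
    have h2 : 1 ≤ ε * s ^ (α - 1) := by
      rw [div_le_iff₀ hε] at h1; linarith
    have h3 : s * 1 ≤ s * (ε * s ^ (α - 1)) := mul_le_mul_of_nonneg_left h2 hspos.le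
    have h4 : s * (ε * s ^ (α - 1)) = ε * s ^ α := by
      rw [show α = 1 + (α - 1) by ring, Real.rpow_add hspos, Real.rpow_one]
      ring
    have : 0 ≤ T := hT0
    nlinarith [h3, h4]

lemma gw_lemL {β : ℝ} (hβ : 0 < β) {K : ℝ} (hK : 0 ≤ K) {ε : ℝ} (hε : 0 < ε) :
    ∃ C : ℝ, 0 ≤ C ∧ ∀ s : ℝ, 0 ≤ s → (s + K) ^ β ≤ (1 + ε) * s ^ β + C := by
  set δ : ℝ := (1 + ε) ^ (1 / β) - 1 with hδ
  have hδpos : 0 < δ := by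
    have : 1 < (1 + ε) ^ (1 / β) :=
      Real.one_lt_rpow_iff_of_pos (by linarith) |>.mpr (Or.inl ⟨by linarith, by positivity⟩)
    simp only [hδ]; linarith
  set T : ℝ := K / δ with hTdef
  have hT0 : 0 ≤ T := div_nonneg hK hδpos.le
  refine ⟨(T + K) ^ β, Real.rpow_nonneg (by linarith) _, fun s hs => ?_⟩
  rcases le_or_gt s T with h | h
  · have h1 : (s + K) ^ β ≤ (T + K) ^ β :=
      Real.rpow_le_rpow (by linarith) (by linarith) hβ.le
    have : 0 ≤ (1 + ε) * s ^ β := by positivity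
    linarith
  · have hKs : K ≤ δ * s := by
      rw [hTdef, div_lt_iff₀ hδpos] at h; linarith
    have h1 : (s + K) ^ β ≤ ((1 + δ) * s) ^ β :=
      Real.rpow_le_rpow (by linarith) (by nlinarith) hβ.le
    have h2 : ((1 + δ) * s) ^ β = (1 + ε) * s ^ β := by
      rw [Real.mul_rpow (by linarith) hs]
      congr 1
      rw [hδ]
      have : (1 : ℝ) + ((1 + ε) ^ (1 / β) - 1) = (1 + ε) ^ (1 / β) := by ring
      rw [this, ← Real.rpow_mul (by linarith), one_div,
        inv_mul_cancel₀ (ne_of_gt hβ), Real.rpow_one]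
    have h3 : 0 ≤ (T + K) ^ β := Real.rpow_nonneg (by linarith) _
    linarith [h1.trans_eq h2]

-- D: (s+K)^β - (max (s-K) 0)^β ≤ ε s^β + C
lemma gw_lemD {β : ℝ} (hβ : 0 < β) {K : ℝ} (hK : 0 ≤ K) {ε : ℝ} (hε : 0 < ε) :
    ∃ C : ℝ, 0 ≤ C ∧ ∀ s : ℝ, 0 ≤ s →
      (s + K) ^ β - (max (s - K) 0) ^ β ≤ ε * s ^ β + C := by
  obtain ⟨C₀, hC₀, hL⟩ := gw_lemL hβ (by linarith : (0:ℝ) ≤ 2 * K) hε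
  refine ⟨C₀ + (2 * K) ^ β, by positivity, fun s hs => ?_⟩
  rcases le_or_gt s K with h | h
  · have h1 : max (s - K) 0 = 0 := max_eq_right (by linarith)
    rw [h1, Real.zero_rpow (ne_of_gt hβ)]
    have h2 : (s + K) ^ β ≤ (2 * K) ^ β :=
      Real.rpow_le_rpow (by linarith) (by linarith) hβ.le
    have : 0 ≤ ε * s ^ β := by positivity
    linarith
  · have h1 : max (s - K) 0 = s - K := max_eq_left (by linarith)
    have h2 := hL (s - K) (by linarith)
    have h3 : s - K + 2 * K = s + K := by ring
    rw [h3] at h2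
    have h4 : (s - K) ^ β ≤ s ^ β := Real.rpow_le_rpow (by linarith) (by linarith) hβ.le
    have h5 : 0 ≤ (2*K) ^ β := Real.rpow_nonneg (by linarith) _
    rw [h1]
    nlinarith

-- P : s * ((s+K)^(α-1) - (max (s-K) 0)^(α-1)) ≤ ε s^α + C
lemma gw_lemP {α : ℝ} (hα : 1 < α) {K : ℝ} (hK : 0 ≤ K) {ε : ℝ} (hε : 0 < ε) :
    ∃ C : ℝ, 0 ≤ C ∧ ∀ s : ℝ, 0 ≤ s →
      s * ((s + K) ^ (α - 1) - (max (s - K) 0) ^ (α - 1)) ≤ ε * s ^ α + C := by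
  have hβ : 0 < α - 1 := by linarith
  obtain ⟨C₁, hC₁, hD⟩ := gw_lemD hβ hK (half_pos hε)
  obtain ⟨C₂, hC₂, hS⟩ := gw_lemS hα (show 0 < ε / 2 / (C₁ + 1) by positivity)
  refine ⟨(C₁ + 1) * C₂, by positivity, fun s hs => ?_⟩
  have h1 := hD s hs
  have hmax : (0:ℝ) ≤ max (s - K) 0 := le_max_right _ _
  have h2 : s * ((s + K) ^ (α - 1) - (max (s - K) 0) ^ (α - 1))
      ≤ s * (ε / 2 * s ^ (α - 1) + C₁) := mul_le_mul_of_nonneg_left h1 hs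
  have h3 : s * s ^ (α - 1) = s ^ α := by
    have hcalc := Real.rpow_add' hs (show (1:ℝ) + (α - 1) ≠ 0 by linarith)
    rw [Real.rpow_one, show (1:ℝ) + (α - 1) = α by ring] at hcalc
    exact hcalc.symm
  have h4 := hS s hs
  have h5 : s * (ε / 2 * s ^ (α - 1) + C₁) = ε / 2 * s ^ α + C₁ * s := by
    rw [← h3]; ring
  have h6 : C₁ * s ≤ (C₁ + 1) * (ε / 2 / (C₁ + 1) * s ^ α + C₂) := by
    have : C₁ * s ≤ (C₁ + 1) * s := by nlinarith
    calc C₁ * s ≤ (C₁ + 1) * s := this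
      _ ≤ (C₁ + 1) * (ε / 2 / (C₁ + 1) * s ^ α + C₂) :=
        mul_le_mul_of_nonneg_left h4 (by linarith)
  have h7 : (C₁ + 1) * (ε / 2 / (C₁ + 1) * s ^ α + C₂)
      = ε / 2 * s ^ α + (C₁ + 1) * C₂ := by
    field_simp
  linarith [h2.trans_eq h5, h6.trans_eq h7]



lemma gw_two {β : ℝ} (hβ : 0 < β) {s h : ℝ} (hs : 0 ≤ s) (hh : 0 ≤ h) :
    (s + h) ^ β ≤ 2 ^ β * (s ^ β + h ^ β) := by
  have h2 : (0:ℝ) ≤ 2 := by norm_num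
  rcases le_total s h with hc | hc
  · have h1 : (s + h) ^ β ≤ (2 * h) ^ β :=
      Real.rpow_le_rpow (by linarith) (by linarith) hβ.le
    rw [Real.mul_rpow h2 hh] at h1
    have : 0 ≤ s ^ β := Real.rpow_nonneg hs _
    nlinarith [Real.rpow_nonneg (show (0:ℝ) ≤ 2 by norm_num) β]
  · have h1 : (s + h) ^ β ≤ (2 * s) ^ β :=
      Real.rpow_le_rpow (by linarith) (by linarith) hβ.le
    rw [Real.mul_rpow h2 hs] at h1
    have : 0 ≤ h ^ β := Real.rpow_nonneg hh _
    nlinarith [Real.rpow_nonneg (show (0:ℝ) ≤ 2 by norm_num) β]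

lemma gw_pointwise {α : ℝ} (hα : 1 < α) {s h K : ℝ} (hK1 : 1 ≤ K) (hs : 0 ≤ s)
    (hst : 0 ≤ s + h) (hhK : -K ≤ h) :
    (s + h) ^ α - s ^ α ≤ α * s ^ (α - 1) * h
      + α * K * ((s + K) ^ (α - 1) - (max (s - K) 0) ^ (α - 1))
      + α * 2 ^ (α - 1) * (s ^ (α - 1) / K ^ (α - 1) + 1) * (max h 0) ^ α := by
  have hβ : 0 < α - 1 := by linarith
  have hα0 : 0 < α := by linarith
  have hK0 : 0 < K := by linarith
  set β := α - 1 with hβdef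
  set t := s + h with htdef
  set M := max (s - K) 0 with hMdef
  have hM0 : 0 ≤ M := le_max_right _ _
  have hMs : M ≤ s := max_le (by linarith) hs
  have hMt : M ≤ t := max_le (by linarith) hst
  have hMsK : M ≤ s + K := by linarith
  have hMβs : M ^ β ≤ s ^ β := Real.rpow_le_rpow hM0 hMs hβ.le
  have hMβt : M ^ β ≤ t ^ β := Real.rpow_le_rpow hM0 hMt hβ.le
  have hMβsK : M ^ β ≤ (s + K) ^ β := Real.rpow_le_rpow hM0 hMsK hβ.le
  have hsβsK : s ^ β ≤ (s + K) ^ β := Real.rpow_le_rpow hs (by linarith) hβ.le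
  have upper : t ^ α - s ^ α ≤ α * t ^ β * h := by
    have := gw_tangent hα hst hs
    have hts : s - t = -h := by rw [htdef]; ring
    rw [hts] at this
    nlinarith [this]
  clear_value β t M
  rcases le_or_gt h K with hcase | hcase
  · -- small jump
    have hG2 : 0 ≤ α * 2 ^ β * (s ^ β / K ^ β + 1) * (max h 0) ^ α := by
      have h1 : (0:ℝ) ≤ 2 ^ β := Real.rpow_nonneg (by norm_num) _
      have h2 : 0 ≤ s ^ β / K ^ β := div_nonneg (Real.rpow_nonneg hs _) (Real.rpow_nonneg hK0.le _)
      have h3 : 0 ≤ (max h 0) ^ α := Real.rpow_nonneg (le_max_right _ _) _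
      positivity
    have key : h * (t ^ β - s ^ β) ≤ K * ((s + K) ^ β - M ^ β) := by
      rcases le_or_gt 0 h with hh | hh
      · have htsK : t ^ β ≤ (s + K) ^ β := Real.rpow_le_rpow hst (by linarith) hβ.le
        have h1 : 0 ≤ t ^ β - s ^ β ∨ t ^ β - s ^ β ≤ 0 := le_or_gt 0 _ |>.imp id le_of_lt
        nlinarith [Real.rpow_nonneg hs β]
      · nlinarith
    have hfinal : α * (h * (t ^ β - s ^ β)) ≤ α * (K * ((s + K) ^ β - M ^ β)) :=
      mul_le_mul_of_nonneg_left key hα0.le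
    nlinarith [upper, hfinal, hG2]
  · -- big jump
    have hh : 0 < h := lt_of_lt_of_le hK0 hcase.le
    have hmax : max h 0 = h := max_eq_left hh.le
    have hG1 : 0 ≤ α * K * ((s + K) ^ β - M ^ β) :=
      mul_nonneg (mul_nonneg hα0.le hK0.le) (by linarith)
    have hlin : 0 ≤ α * s ^ β * h := by
      have := Real.rpow_nonneg hs β
      positivity
    have h2β : t ^ β ≤ 2 ^ β * (s ^ β + h ^ β) := by
      rw [htdef]; exact gw_two hβ hs hh.le
    have hub : t ^ α - s ^ α ≤ α * (2 ^ β * (s ^ β + h ^ β)) * h := by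
      have h1 : α * t ^ β * h ≤ α * (2 ^ β * (s ^ β + h ^ β)) * h := by
        have := mul_le_mul_of_nonneg_left h2β hα0.le
        exact mul_le_mul_of_nonneg_right this hh.le
      linarith [upper]
    have hβh : h ^ β * h = h ^ α := by
      have := Real.rpow_add' hh.le (show β + 1 ≠ 0 by rw [hβdef]; intro hq; nlinarith)
      rw [Real.rpow_one] at this
      rw [show β + 1 = α by rw [hβdef]; ring] at this
      linarith [this]
    have hhle : h ≤ h ^ α / K ^ β := by
      have hKβ : 0 < K ^ β := Real.rpow_pos_of_pos hK0 _
      rw [le_div_iff₀ hKβ]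
      have h1 : K ^ β ≤ h ^ β := Real.rpow_le_rpow hK0.le hcase.le hβ.le
      calc h * K ^ β ≤ h * h ^ β := mul_le_mul_of_nonneg_left h1 hh.le
        _ = h ^ α := by rw [mul_comm]; exact hβh
    have hsβ : 0 ≤ s ^ β := Real.rpow_nonneg hs _
    have h2β0 : (0:ℝ) < 2 ^ β := Real.rpow_pos_of_pos (by norm_num) _
    have hfin : α * (2 ^ β * (s ^ β + h ^ β)) * h
        ≤ α * 2 ^ β * (s ^ β / K ^ β + 1) * h ^ α := by
      have e1 : α * (2 ^ β * (s ^ β + h ^ β)) * h = α * 2 ^ β * (s ^ β * h + h ^ β * h) := by ring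
      have e2 : α * 2 ^ β * (s ^ β / K ^ β + 1) * h ^ α
          = α * 2 ^ β * (s ^ β * (h ^ α / K ^ β) + h ^ α) := by
        ring
      rw [e1, e2, hβh]
      have h3 : s ^ β * h ≤ s ^ β * (h ^ α / K ^ β) := mul_le_mul_of_nonneg_left hhle hsβ
      have h4 : (0:ℝ) ≤ α * 2 ^ β := by positivity
      nlinarith
    rw [hmax]
    linarith [hub, hfin, hG1, hlin]



section claims

variable {d : ℕ} {α : ℝ} (hα : 1 < α) (v : Fin d → ℝ) (hv : ∀ j, 0 < v j)
  (q : (Fin d → ℕ) → ℝ) (hq0 : ∀ n, 0 ≤ q n) (hq1 : ∑' n, q n = 1)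
  (hmomq : Summable (fun n : Fin d → ℕ => (∑ j, (n j : ℝ)) ^ α * q n))

lemma gw_wb {d : ℕ} (v : Fin d → ℝ) (hv : ∀ j, 0 < v j) (n : Fin d → ℕ) :
    (∑ j, v j * (n j : ℝ)) ≤ (∑ j, v j) * ∑ j, (n j : ℝ) := by
  rw [Finset.sum_mul]
  refine Finset.sum_le_sum fun j _ => ?_
  refine mul_le_mul_of_nonneg_left ?_ (hv j).le
  exact Finset.single_le_sum (f := fun j => (n j : ℝ))
    (fun j _ => Nat.cast_nonneg _) (Finset.mem_univ _)

include hq0 hq1 in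
lemma gw_sum_q : Summable q := by
  by_contra hcon
  rw [tsum_eq_zero_of_not_summable hcon] at hq1
  norm_num at hq1

include hα hq0 hq1 hmomq in
lemma gw_sum_S : Summable (fun n : Fin d → ℕ => (∑ j, (n j : ℝ)) * q n) := by
  have hq := gw_sum_q q hq0 hq1
  apply Summable.of_nonneg_of_le
    (fun n => mul_nonneg (Finset.sum_nonneg fun j _ => Nat.cast_nonneg _) (hq0 n))
    (fun n => ?_) ((hq.add hmomq).congr (fun n => rfl))
  have hSn : (0:ℝ) ≤ ∑ j, (n j : ℝ) := Finset.sum_nonneg fun j _ => Nat.cast_nonneg _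
  have hbound : (∑ j, (n j : ℝ)) ≤ 1 + (∑ j, (n j : ℝ)) ^ α := by
    rcases le_or_gt (∑ j, (n j : ℝ)) 1 with hc | hc
    · have : (0:ℝ) ≤ (∑ j, (n j : ℝ)) ^ α := Real.rpow_nonneg hSn _
      linarith
    · have h1 : (∑ j, (n j : ℝ)) ^ (1:ℝ) ≤ (∑ j, (n j : ℝ)) ^ α :=
        Real.rpow_le_rpow_of_exponent_le hc.le hα.le
      rw [Real.rpow_one] at h1
      have : (0:ℝ) ≤ (∑ j, (n j : ℝ)) ^ α := Real.rpow_nonneg hSn _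
      linarith
    
  calc (∑ j, (n j : ℝ)) * q n ≤ (1 + (∑ j, (n j : ℝ)) ^ α) * q n :=
        mul_le_mul_of_nonneg_right hbound (hq0 n)
    _ = q n + (∑ j, (n j : ℝ)) ^ α * q n := by ring

include hα hv hq0 hq1 hmomq in
lemma gw_sum_w : Summable (fun n : Fin d → ℕ => (∑ j, v j * (n j : ℝ)) * q n) := by
  have hS := gw_sum_S hα q hq0 hq1 hmomq
  set c : ℝ := ∑ j, v j with hc
  apply Summable.of_nonneg_of_le
    (fun n => mul_nonneg (Finset.sum_nonneg fun j _ =>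
      mul_nonneg (hv j).le (Nat.cast_nonneg _)) (hq0 n))
    (fun n => ?_) (hS.mul_left c)
  have hwb : (∑ j, v j * (n j : ℝ)) ≤ c * ∑ j, (n j : ℝ) := gw_wb v hv n
  calc (∑ j, v j * (n j : ℝ)) * q n ≤ (c * ∑ j, (n j : ℝ)) * q n :=
        mul_le_mul_of_nonneg_right hwb (hq0 n)
    _ = c * ((∑ j, (n j : ℝ)) * q n) := by ring

include hα hv hq0 hq1 hmomq in
lemma gw_sum_walpha :
    Summable (fun n : Fin d → ℕ => (∑ j, v j * (n j : ℝ)) ^ α * q n) := by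
  set c : ℝ := ∑ j, v j with hc
  have hcpos : 0 ≤ c := Finset.sum_nonneg fun j _ => (hv j).le
  apply Summable.of_nonneg_of_le
    (fun n => mul_nonneg (Real.rpow_nonneg (Finset.sum_nonneg fun j _ =>
      mul_nonneg (hv j).le (Nat.cast_nonneg _)) _) (hq0 n))
    (fun n => ?_) ((hmomq.mul_left (c ^ α)).congr (fun n => rfl))
  have hSn : (0:ℝ) ≤ ∑ j, (n j : ℝ) := Finset.sum_nonneg fun j _ => Nat.cast_nonneg _
  have hwb : (∑ j, v j * (n j : ℝ)) ≤ c * ∑ j, (n j : ℝ) := gw_wb v hv n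
  have h1 : (∑ j, v j * (n j : ℝ)) ^ α ≤ (c * ∑ j, (n j : ℝ)) ^ α :=
    Real.rpow_le_rpow (Finset.sum_nonneg fun j _ =>
      mul_nonneg (hv j).le (Nat.cast_nonneg _)) hwb (by linarith)
  rw [Real.mul_rpow hcpos hSn] at h1
  calc (∑ j, v j * (n j : ℝ)) ^ α * q n ≤ (c ^ α * (∑ j, (n j : ℝ)) ^ α) * q n :=
        mul_le_mul_of_nonneg_right h1 (hq0 n)
    _ = c ^ α * ((∑ j, (n j : ℝ)) ^ α * q n) := by ring

include hα hv hq0 hq1 hmomq in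
lemma gw_sum_max {b : ℝ} (hb : 0 ≤ b) :
    Summable (fun n : Fin d → ℕ => (max ((∑ j, v j * (n j : ℝ)) - b) 0) ^ α * q n) := by
  have hwα := gw_sum_walpha hα v hv q hq0 hq1 hmomq
  apply Summable.of_nonneg_of_le
    (fun n => mul_nonneg (Real.rpow_nonneg (le_max_right _ _) _) (hq0 n))
    (fun n => ?_) hwα
  have hw0 : (0:ℝ) ≤ ∑ j, v j * (n j : ℝ) :=
    Finset.sum_nonneg fun j _ => mul_nonneg (hv j).le (Nat.cast_nonneg _)
  have h1 : max ((∑ j, v j * (n j : ℝ)) - b) 0 ≤ ∑ j, v j * (n j : ℝ) :=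
    max_le (by linarith) hw0
  exact mul_le_mul_of_nonneg_right
    (Real.rpow_le_rpow (le_max_right _ _) h1 (by linarith)) (hq0 n)

include hα hq0 hq1 hmomq in
lemma gw_sum_nj (j₀ : Fin d) :
    Summable (fun n : Fin d → ℕ => (n j₀ : ℝ) * q n) := by
  have hS := gw_sum_S hα q hq0 hq1 hmomq
  apply Summable.of_nonneg_of_le
    (fun n => mul_nonneg (Nat.cast_nonneg _) (hq0 n)) (fun n => ?_) hS
  have : (n j₀ : ℝ) ≤ ∑ j, (n j : ℝ) :=
    Finset.single_le_sum (f := fun j => (n j : ℝ)) (fun j _ => Nat.cast_nonneg _)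
      (Finset.mem_univ _)
  exact mul_le_mul_of_nonneg_right this (hq0 n)

include hα hv hq0 hq1 hmomq in
lemma gw_claim (i : Fin d) {K s : ℝ} (hK1 : 1 ≤ K) (hKv : v i ≤ K) (hsv : v i ≤ s) :
    ∑' n : Fin d → ℕ, q n * ((s + (∑ j, v j * (n j : ℝ)) - v i) ^ α - s ^ α)
      ≤ α * s ^ (α - 1) * ((∑' n : Fin d → ℕ, (∑ j, v j * (n j : ℝ)) * q n) - v i)
        + α * K * ((s + K) ^ (α - 1) - (max (s - K) 0) ^ (α - 1))
        + α * 2 ^ (α - 1) * (s ^ (α - 1) / K ^ (α - 1) + 1)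
          * ∑' n : Fin d → ℕ, (max ((∑ j, v j * (n j : ℝ)) - v i) 0) ^ α * q n := by
  have hβ : (0:ℝ) < α - 1 := by linarith
  have hs0 : 0 ≤ s := le_trans (hv i).le hsv
  set w : (Fin d → ℕ) → ℝ := fun n => ∑ j, v j * (n j : ℝ) with hw
  have hw0 : ∀ n, 0 ≤ w n := fun n =>
    Finset.sum_nonneg fun j _ => mul_nonneg (hv j).le (Nat.cast_nonneg _)
  set G1 : ℝ := α * K * ((s + K) ^ (α - 1) - (max (s - K) 0) ^ (α - 1)) with hG1def
  set coef : ℝ := α * 2 ^ (α - 1) * (s ^ (α - 1) / K ^ (α - 1) + 1) with hcoefdef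
  have hcoef0 : 0 ≤ coef := by
    have h1 : (0:ℝ) ≤ 2 ^ (α - 1) := Real.rpow_nonneg (by norm_num) _
    have h2 : (0:ℝ) ≤ s ^ (α - 1) / K ^ (α - 1) :=
      div_nonneg (Real.rpow_nonneg hs0 _) (Real.rpow_nonneg (by linarith) _)
    rw [hcoefdef]; positivity
  have hG10 : 0 ≤ G1 := by
    have h1 : max (s - K) 0 ≤ s + K := max_le (by linarith) (by linarith)
    have h2 : (max (s - K) 0) ^ (α - 1) ≤ (s + K) ^ (α - 1) :=
      Real.rpow_le_rpow (le_max_right _ _) h1 hβ.le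
    rw [hG1def]
    have : (0:ℝ) ≤ α * K := by positivity
    nlinarith
  -- pointwise bound
  have hpt : ∀ n, q n * ((s + w n - v i) ^ α - s ^ α)
      ≤ (α * s ^ (α - 1)) * (w n * q n) - (α * s ^ (α - 1) * v i) * q n
        + q n * G1 + coef * ((max (w n - v i) 0) ^ α * q n) := by
    intro n
    have hst : 0 ≤ s + (w n - v i) := by have := hw0 n; linarith
    have hhK : -K ≤ w n - v i := by have := hw0 n; linarith
    have hb := gw_pointwise hα hK1 hs0 hst hhK
    have h2 : (s + w n - v i) ^ α - s ^ α
        ≤ α * s ^ (α - 1) * (w n - v i) + G1 + coef * (max (w n - v i) 0) ^ α := by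
      rw [show s + w n - v i = s + (w n - v i) by ring]
      exact hb
    calc q n * ((s + w n - v i) ^ α - s ^ α)
        ≤ q n * (α * s ^ (α - 1) * (w n - v i) + G1 + coef * (max (w n - v i) 0) ^ α) :=
          mul_le_mul_of_nonneg_left h2 (hq0 n)
      _ = (α * s ^ (α - 1)) * (w n * q n) - (α * s ^ (α - 1) * v i) * q n
          + q n * G1 + coef * ((max (w n - v i) 0) ^ α * q n) := by ring
  -- pointwise lower bound (for summability)
  have hlow : ∀ n, (α * s ^ (α - 1)) * (w n * q n) - (α * s ^ (α - 1) * v i) * q n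
      ≤ q n * ((s + w n - v i) ^ α - s ^ α) := by
    intro n
    have hst : 0 ≤ s + (w n - v i) := by have := hw0 n; linarith
    have htan := gw_tangent hα hs0 hst
    have h2 : α * s ^ (α - 1) * (w n - v i) ≤ (s + w n - v i) ^ α - s ^ α := by
      rw [show s + w n - v i = s + (w n - v i) by ring]
      have : s + (w n - v i) - s = w n - v i := by ring
      rw [this] at htan
      linarith
    calc (α * s ^ (α - 1)) * (w n * q n) - (α * s ^ (α - 1) * v i) * q n
        = q n * (α * s ^ (α - 1) * (w n - v i)) := by ring
      _ ≤ q n * ((s + w n - v i) ^ α - s ^ α) := mul_le_mul_of_nonneg_left h2 (hq0 n)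
  -- summability
  have hsmq : Summable q := gw_sum_q q hq0 hq1
  have hsmw : Summable (fun n => w n * q n) := gw_sum_w hα v hv q hq0 hq1 hmomq
  have hsmmax : Summable (fun n => (max (w n - v i) 0) ^ α * q n) :=
    gw_sum_max hα v hv q hq0 hq1 hmomq (hv i).le
  have hsmf1 : Summable (fun n => (α * s ^ (α - 1)) * (w n * q n)
      - (α * s ^ (α - 1) * v i) * q n) :=
    (hsmw.mul_left _).sub (hsmq.mul_left _)
  have hsmf2 : Summable (fun n => q n * G1) := hsmq.mul_right _
  have hsmf3 : Summable (fun n => coef * ((max (w n - v i) 0) ^ α * q n)) := hsmmax.mul_left _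
  have hsmg : Summable (fun n => q n * ((s + w n - v i) ^ α - s ^ α)
      - ((α * s ^ (α - 1)) * (w n * q n) - (α * s ^ (α - 1) * v i) * q n)) := by
    apply Summable.of_nonneg_of_le (fun n => by linarith [hlow n]) (fun n => ?_)
      (hsmf2.add hsmf3)
    have := hpt n
    linarith
  have hsmlhs : Summable (fun n => q n * ((s + w n - v i) ^ α - s ^ α)) := by
    have := hsmg.add hsmf1
    refine this.congr fun n => by ring
  -- tsum compare
  have hmain := Summable.tsum_le_tsum hpt hsmlhs ((hsmf1.add hsmf2).add hsmf3)
  rw [Summable.tsum_add (hsmf1.add hsmf2) hsmf3, Summable.tsum_add hsmf1 hsmf2] at hmain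
  have e1 : ∑' n, ((α * s ^ (α - 1)) * (w n * q n) - (α * s ^ (α - 1) * v i) * q n)
      = α * s ^ (α - 1) * ((∑' n, w n * q n) - v i) := by
    rw [Summable.tsum_sub (hsmw.mul_left _) (hsmq.mul_left _), tsum_mul_left, tsum_mul_left, hq1]
    ring
  have e2 : ∑' n, q n * G1 = G1 := by
    rw [tsum_mul_right, hq1, one_mul]
  have e3 : ∑' n, coef * ((max (w n - v i) 0) ^ α * q n)
      = coef * ∑' n, (max (w n - v i) 0) ^ α * q n := tsum_mul_left
  rw [e1, e2, e3] at hmain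
  exact hmain

end claims



lemma gw_m_eq {d : ℕ} {α : ℝ} (hα : 1 < α)
    (v : Fin d → ℝ) (q : (Fin d → ℕ) → ℝ) (hq0 : ∀ n, 0 ≤ q n)
    (hq1 : ∑' n, q n = 1)
    (hmomq : Summable (fun n : Fin d → ℕ => (∑ j, (n j : ℝ)) ^ α * q n)) :
    ∑' n : Fin d → ℕ, (∑ j, v j * (n j : ℝ)) * q n
      = ∑ j, v j * ∑' n : Fin d → ℕ, (n j : ℝ) * q n := by
  have h1 : ∀ n : Fin d → ℕ, (∑ j, v j * (n j : ℝ)) * q n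
      = ∑ j, v j * ((n j : ℝ) * q n) := by
    intro n
    rw [Finset.sum_mul]
    exact Finset.sum_congr rfl fun j _ => by ring
  rw [tsum_congr h1,
    Summable.tsum_finsetSum (fun j _ => (gw_sum_nj hα q hq0 hq1 hmomq j).mul_left (v j))]
  exact Finset.sum_congr rfl fun j _ => tsum_mul_left

/-- For a subcritical multi-type continuous-time Galton–Watson process (positive right
eigenvector `v` of `Q` with eigenvalue `ρ < 0`) with finite `α`-moments (`α > 1`), the
Lyapunov function `V(x) = ⟨v,x⟩^α` satisfies the Foster–Lyapunov drift inequality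
`LV ≤ -λ₁ V + C` for every `λ₁ ∈ (0, α(-ρ))` and some `C ≥ 0`. -/
theorem multitype_galton_watson_lyapunov_drift
    (d : ℕ) (hd : 1 ≤ d)
    (lam : Fin d → ℝ) (hlam : ∀ i, 0 < lam i)
    (p : Fin d → (Fin d → ℕ) → ℝ) (hp : ∀ i n, 0 ≤ p i n)
    (hp1 : ∀ i, ∑' n : Fin d → ℕ, p i n = 1)
    (α : ℝ) (hα : 1 < α)
    (hmom : ∀ i, Summable (fun n : Fin d → ℕ => (∑ j, (n j : ℝ)) ^ α * p i n))
    (v : Fin d → ℝ) (hv : ∀ j, 0 < v j) (ρ : ℝ) (hρ : ρ < 0)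
    (hQv : ∀ i, ∑ j,
        ((lam i * ∑' n : Fin d → ℕ, (n j : ℝ) * p i n)
          - (if i = j then lam i else 0)) * v j = ρ * v i) :
    ∀ lam₁ : ℝ, 0 < lam₁ → lam₁ < α * (-ρ) →
      ∃ C : ℝ, 0 ≤ C ∧ ∀ x : Fin d → ℕ, x ≠ 0 →
        (∑ i ∈ Finset.univ.filter (fun i => 1 ≤ x i),
            lam i * (x i : ℝ) *
              ∑' n : Fin d → ℕ,
                p i n * (((∑ j, v j * (x j : ℝ)) + (∑ j, v j * (n j : ℝ)) - v i) ^ α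
                  - (∑ j, v j * (x j : ℝ)) ^ α))
          ≤ -lam₁ * (∑ j, v j * (x j : ℝ)) ^ α + C := by
  intro lam₁ hl1 hl2
  have hβ : (0:ℝ) < α - 1 := by linarith
  have hα0 : (0:ℝ) < α := by linarith
  have h2β : (0:ℝ) < 2 ^ (α - 1) := Real.rpow_pos_of_pos (by norm_num) _
  -- eigen identity
  have hkey : ∀ i, lam i * ((∑' n : Fin d → ℕ, (∑ j, v j * (n j : ℝ)) * p i n) - v i)
      = ρ * v i := by
    intro i
    have hm := gw_m_eq hα v (p i) (hp i) (hp1 i) (hmom i)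
    have hq := hQv i
    have e1 : ∑ j, ((lam i * ∑' n : Fin d → ℕ, (n j : ℝ) * p i n)
          - (if i = j then lam i else 0)) * v j
        = (∑ j, lam i * ((v j) * ∑' n : Fin d → ℕ, (n j : ℝ) * p i n))
          - ∑ j, (if i = j then lam i else 0) * v j := by
      rw [← Finset.sum_sub_distrib]
      exact Finset.sum_congr rfl fun j _ => by ring
    have e2 : ∑ j, (if i = j then lam i else 0) * v j = lam i * v i := by
      rw [Finset.sum_eq_single i]
      · simp
      · intro b _ hb
        simp [Ne.symm hb]
      · intro h; exact absurd (Finset.mem_univ i) h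
    have e3 : (∑ j, lam i * ((v j) * ∑' n : Fin d → ℕ, (n j : ℝ) * p i n))
        = lam i * ∑' n : Fin d → ℕ, (∑ j, v j * (n j : ℝ)) * p i n := by
      rw [hm, Finset.mul_sum]
    rw [e1, e2, e3] at hq
    linarith [hq]
  -- constants
  set Λ : ℝ := ∑ i, lam i / v i with hΛdef
  have hΛ0 : 0 ≤ Λ := Finset.sum_nonneg fun i _ => div_nonneg (hlam i).le (hv i).le
  set cv : ℝ := ∑ j, v j with hcvdef
  have hcv0 : 0 ≤ cv := Finset.sum_nonneg fun j _ => (hv j).le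
  set A : Fin d → ℝ := fun i =>
    ∑' n : Fin d → ℕ, (max ((∑ j, v j * (n j : ℝ)) - v i) 0) ^ α * p i n with hAdef
  have hA0 : ∀ i, 0 ≤ A i := fun i =>
    tsum_nonneg fun n => mul_nonneg (Real.rpow_nonneg (le_max_right _ _) _) (hp i n)
  set W : ℝ := ∑ i, lam i / v i * A i with hWdef
  have hW0 : 0 ≤ W := Finset.sum_nonneg fun i _ =>
    mul_nonneg (div_nonneg (hlam i).le (hv i).le) (hA0 i)
  set δ : ℝ := α * (-ρ) - lam₁ with hδdef
  have hδ : 0 < δ := by rw [hδdef]; linarith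
  -- choice of K
  set Z : ℝ := 3 * α * 2 ^ (α - 1) * (W + 1) / δ with hZdef
  have hZ0 : 0 ≤ Z := by
    rw [hZdef]; positivity
  set K : ℝ := max (1 + cv) (Z ^ (1 / (α - 1))) with hKdef
  have hK1 : 1 ≤ K := le_trans (by linarith) (le_max_left _ _)
  have hK0 : (0:ℝ) < K := by linarith
  have hKv : ∀ i, v i ≤ K := by
    intro i
    have h1 : v i ≤ cv := by
      rw [hcvdef]
      exact Finset.single_le_sum (f := fun j => v j) (fun j _ => (hv j).le)
        (Finset.mem_univ i)
    exact le_trans (by linarith) (le_max_left _ _)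
  have hKβpos : (0:ℝ) < K ^ (α - 1) := Real.rpow_pos_of_pos hK0 _
  have hKZ : Z ≤ K ^ (α - 1) := by
    have h1 : Z ^ (1 / (α - 1)) ≤ K := le_max_right _ _
    have h2 : (Z ^ (1 / (α - 1))) ^ (α - 1) ≤ K ^ (α - 1) :=
      Real.rpow_le_rpow (Real.rpow_nonneg hZ0 _) h1 hβ.le
    rwa [← Real.rpow_mul hZ0, one_div, inv_mul_cancel₀ (ne_of_gt hβ),
      Real.rpow_one] at h2
  have hKb : α * 2 ^ (α - 1) * W / K ^ (α - 1) ≤ δ / 3 := by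
    have hb' : (0:ℝ) < α * 2 ^ (α - 1) * (W + 1) := by positivity
    have hZpos : 0 < Z := by rw [hZdef]; positivity
    have h1 : α * 2 ^ (α - 1) * W / K ^ (α - 1)
        ≤ α * 2 ^ (α - 1) * (W + 1) / Z := by
      apply div_le_div₀ (by positivity) (by nlinarith) hZpos hKZ
    have h2 : α * 2 ^ (α - 1) * (W + 1) / Z = δ / 3 := by
      rw [hZdef,
        show (3:ℝ) * α * 2 ^ (α - 1) * (W + 1) = α * 2 ^ (α - 1) * (W + 1) * 3 by ring,
        div_div_eq_mul_div, mul_comm (α * 2 ^ (α - 1) * (W + 1)) δ, mul_div_assoc,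
        div_mul_cancel_left₀ (ne_of_gt hb'), ← div_eq_mul_inv]
    linarith [h1, h2.le]
  -- constants from lemmas
  have haKΛ : (0:ℝ) ≤ α * K * Λ := mul_nonneg (mul_nonneg hα0.le hK0.le) hΛ0
  have hb0 : (0:ℝ) ≤ α * 2 ^ (α - 1) * W := by positivity
  obtain ⟨C₁, hC₁0, hP⟩ := gw_lemP hα hK0.le
    (show (0:ℝ) < δ / (3 * (α * K * Λ + 1)) from div_pos hδ (by linarith))
  obtain ⟨C₂, hC₂0, hSl⟩ := gw_lemS hα
    (show (0:ℝ) < δ / (3 * (α * 2 ^ (α - 1) * W + 1)) from div_pos hδ (by linarith))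
  refine ⟨(α * K * Λ + 1) * C₁ + (α * 2 ^ (α - 1) * W + 1) * C₂,
    add_nonneg (mul_nonneg (by linarith) hC₁0) (mul_nonneg (by linarith) hC₂0),
    fun x hx => ?_⟩
  set s : ℝ := ∑ j, v j * (x j : ℝ) with hsdef
  have hterm0 : ∀ j, (0:ℝ) ≤ v j * (x j : ℝ) :=
    fun j => mul_nonneg (hv j).le (Nat.cast_nonneg _)
  have hvxs : ∀ i, v i * (x i : ℝ) ≤ s := by
    intro i
    rw [hsdef]
    exact Finset.single_le_sum (f := fun j => v j * (x j : ℝ))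
      (fun j _ => hterm0 j) (Finset.mem_univ i)
  have hs0 : 0 < s := by
    obtain ⟨j, hj⟩ : ∃ j, x j ≠ 0 := by
      by_contra hcon
      push_neg at hcon
      exact hx (funext fun j => hcon j)
    have h2 : (1:ℝ) ≤ (x j : ℝ) := by exact_mod_cast Nat.one_le_iff_ne_zero.mpr hj
    have := hvxs j
    nlinarith [hv j]
  have hsv : ∀ i, 1 ≤ x i → v i ≤ s := by
    intro i hi
    have h2 : (1:ℝ) ≤ (x i : ℝ) := by exact_mod_cast hi
    nlinarith [hvxs i, hv i]
  have hsα : (0:ℝ) ≤ s ^ α := Real.rpow_nonneg hs0.le _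
  have hss : s ^ (α - 1) * s = s ^ α := by
    have hcalc := Real.rpow_add' hs0.le (show (α - 1) + 1 ≠ 0 by
      intro hcon; nlinarith)
    rw [Real.rpow_one, show (α - 1) + 1 = α by ring] at hcalc
    exact hcalc.symm
  have hxle : ∀ i, lam i * (x i : ℝ) ≤ lam i / v i * s := by
    intro i
    rw [div_mul_eq_mul_div, le_div_iff₀ (hv i)]
    have := hvxs i
    nlinarith [hlam i, (Nat.cast_nonneg (x i) : (0:ℝ) ≤ (x i : ℝ))]
  have hE2 : (0:ℝ) ≤ α * K * ((s + K) ^ (α - 1) - (max (s - K) 0) ^ (α - 1)) := by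
    have h1 : max (s - K) 0 ≤ s + K := max_le (by linarith) (by linarith)
    have h2 : (max (s - K) 0) ^ (α - 1) ≤ (s + K) ^ (α - 1) :=
      Real.rpow_le_rpow (le_max_right _ _) h1 hβ.le
    have h3 : (0:ℝ) ≤ α * K := by positivity
    nlinarith
  have hcoef0 : (0:ℝ) ≤ α * 2 ^ (α - 1) * (s ^ (α - 1) / K ^ (α - 1) + 1) := by
    have h2 : (0:ℝ) ≤ s ^ (α - 1) / K ^ (α - 1) :=
      div_nonneg (Real.rpow_nonneg hs0.le _) hKβpos.le
    positivity
  -- per-type claim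
  have hcl : ∀ i ∈ Finset.univ.filter (fun i => 1 ≤ x i),
      lam i * (x i : ℝ) * (∑' n : Fin d → ℕ,
          p i n * ((s + (∑ j, v j * (n j : ℝ)) - v i) ^ α - s ^ α))
        ≤ lam i * (x i : ℝ) *
            (α * s ^ (α - 1) * ((∑' n : Fin d → ℕ, (∑ j, v j * (n j : ℝ)) * p i n) - v i)
              + α * K * ((s + K) ^ (α - 1) - (max (s - K) 0) ^ (α - 1))
              + α * 2 ^ (α - 1) * (s ^ (α - 1) / K ^ (α - 1) + 1) * A i) := by
    intro i hi
    have hmem := (Finset.mem_filter.mp hi).2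
    refine mul_le_mul_of_nonneg_left ?_ (mul_nonneg (hlam i).le (Nat.cast_nonneg _))
    have hc := gw_claim hα v hv (p i) (hp i) (hp1 i) (hmom i) i hK1 (hKv i) (hsv i hmem)
    simp only [hAdef]
    exact hc
  have step1 := Finset.sum_le_sum hcl
  have step2 : ∑ i ∈ Finset.univ.filter (fun i => 1 ≤ x i),
      lam i * (x i : ℝ) *
          (α * s ^ (α - 1) * ((∑' n : Fin d → ℕ, (∑ j, v j * (n j : ℝ)) * p i n) - v i)
            + α * K * ((s + K) ^ (α - 1) - (max (s - K) 0) ^ (α - 1))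
            + α * 2 ^ (α - 1) * (s ^ (α - 1) / K ^ (α - 1) + 1) * A i)
      = (∑ i ∈ Finset.univ.filter (fun i => 1 ≤ x i),
          (α * s ^ (α - 1) * ρ) * (v i * (x i : ℝ)))
        + ∑ i ∈ Finset.univ.filter (fun i => 1 ≤ x i),
            lam i * (x i : ℝ) *
              (α * K * ((s + K) ^ (α - 1) - (max (s - K) 0) ^ (α - 1))
                + α * 2 ^ (α - 1) * (s ^ (α - 1) / K ^ (α - 1) + 1) * A i) := by
    rw [← Finset.sum_add_distrib]
    refine Finset.sum_congr rfl fun i hi => ?_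
    linear_combination (α * s ^ (α - 1) * (x i : ℝ)) * hkey i
  have step3 : ∑ i ∈ Finset.univ.filter (fun i => 1 ≤ x i),
      (α * s ^ (α - 1) * ρ) * (v i * (x i : ℝ)) = α * ρ * s ^ α := by
    have e1 : ∑ i ∈ Finset.univ.filter (fun i => 1 ≤ x i),
        (α * s ^ (α - 1) * ρ) * (v i * (x i : ℝ))
        = ∑ i, (α * s ^ (α - 1) * ρ) * (v i * (x i : ℝ)) := by
      refine Finset.sum_filter_of_ne fun i _ hne => ?_
      by_contra hcon
      have : x i = 0 := Nat.lt_one_iff.mp (not_le.mp hcon)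
      simp [this] at hne
    rw [e1, ← Finset.mul_sum, ← hsdef]
    linear_combination (α * ρ) * hss
  have step4 : ∑ i ∈ Finset.univ.filter (fun i => 1 ≤ x i),
      lam i * (x i : ℝ) *
        (α * K * ((s + K) ^ (α - 1) - (max (s - K) 0) ^ (α - 1))
          + α * 2 ^ (α - 1) * (s ^ (α - 1) / K ^ (α - 1) + 1) * A i)
      ≤ s * (α * K * ((s + K) ^ (α - 1) - (max (s - K) 0) ^ (α - 1))) * Λ
        + s * (α * 2 ^ (α - 1) * (s ^ (α - 1) / K ^ (α - 1) + 1)) * W := by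
    have hnn : ∀ i, (0:ℝ) ≤ α * K * ((s + K) ^ (α - 1) - (max (s - K) 0) ^ (α - 1))
        + α * 2 ^ (α - 1) * (s ^ (α - 1) / K ^ (α - 1) + 1) * A i :=
      fun i => add_nonneg hE2 (mul_nonneg hcoef0 (hA0 i))
    calc ∑ i ∈ Finset.univ.filter (fun i => 1 ≤ x i),
        lam i * (x i : ℝ) *
          (α * K * ((s + K) ^ (α - 1) - (max (s - K) 0) ^ (α - 1))
            + α * 2 ^ (α - 1) * (s ^ (α - 1) / K ^ (α - 1) + 1) * A i)
        ≤ ∑ i ∈ Finset.univ.filter (fun i => 1 ≤ x i),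
          (lam i / v i * s) *
            (α * K * ((s + K) ^ (α - 1) - (max (s - K) 0) ^ (α - 1))
              + α * 2 ^ (α - 1) * (s ^ (α - 1) / K ^ (α - 1) + 1) * A i) :=
          Finset.sum_le_sum fun i _ => mul_le_mul_of_nonneg_right (hxle i) (hnn i)
      _ ≤ ∑ i, (lam i / v i * s) *
            (α * K * ((s + K) ^ (α - 1) - (max (s - K) 0) ^ (α - 1))
              + α * 2 ^ (α - 1) * (s ^ (α - 1) / K ^ (α - 1) + 1) * A i) :=
          Finset.sum_le_sum_of_subset_of_nonneg (Finset.filter_subset _ _)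
            (fun i _ _ => mul_nonneg
              (mul_nonneg (div_nonneg (hlam i).le (hv i).le) hs0.le) (hnn i))
      _ = s * (α * K * ((s + K) ^ (α - 1) - (max (s - K) 0) ^ (α - 1))) * Λ
          + s * (α * 2 ^ (α - 1) * (s ^ (α - 1) / K ^ (α - 1) + 1)) * W := by
          rw [hΛdef, hWdef, Finset.mul_sum, Finset.mul_sum, ← Finset.sum_add_distrib]
          exact Finset.sum_congr rfl fun i _ => by ring
  -- final numeric bounds
  have hPx := hP s hs0.le
  have hSx := hSl s hs0.le
  have hT1 : s * (α * K * ((s + K) ^ (α - 1) - (max (s - K) 0) ^ (α - 1))) * Λ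
      ≤ δ / 3 * s ^ α + (α * K * Λ + 1) * C₁ := by
    have h1 : s * (α * K * ((s + K) ^ (α - 1) - (max (s - K) 0) ^ (α - 1))) * Λ
        = (α * K * Λ) * (s * ((s + K) ^ (α - 1) - (max (s - K) 0) ^ (α - 1))) := by ring
    have h2 : (α * K * Λ) * (s * ((s + K) ^ (α - 1) - (max (s - K) 0) ^ (α - 1)))
        ≤ (α * K * Λ) * (δ / (3 * (α * K * Λ + 1)) * s ^ α + C₁) :=
      mul_le_mul_of_nonneg_left hPx haKΛ
    have hfrac : (α * K * Λ) * (δ / (3 * (α * K * Λ + 1))) ≤ δ / 3 := by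
      rw [mul_div_assoc', div_le_div_iff₀ (by linarith : (0:ℝ) < 3 * (α * K * Λ + 1))
        (by norm_num : (0:ℝ) < 3)]
      nlinarith [hδ.le, haKΛ]
    have h3 : (α * K * Λ) * (δ / (3 * (α * K * Λ + 1)) * s ^ α + C₁)
        ≤ δ / 3 * s ^ α + (α * K * Λ + 1) * C₁ := by
      have h4 := mul_le_mul_of_nonneg_right hfrac hsα
      nlinarith [hC₁0, haKΛ]
    linarith [h1.le.trans (h2.trans h3)]
  have hT2 : s * (α * 2 ^ (α - 1) * (s ^ (α - 1) / K ^ (α - 1) + 1)) * W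
      ≤ δ / 3 * s ^ α + (δ / 3 * s ^ α + (α * 2 ^ (α - 1) * W + 1) * C₂) := by
    have e : s * (α * 2 ^ (α - 1) * (s ^ (α - 1) / K ^ (α - 1) + 1)) * W
        = (α * 2 ^ (α - 1) * W / K ^ (α - 1)) * (s ^ (α - 1) * s)
          + (α * 2 ^ (α - 1) * W) * s := by
      field_simp
    rw [hss] at e
    have h1 : (α * 2 ^ (α - 1) * W / K ^ (α - 1)) * s ^ α ≤ δ / 3 * s ^ α :=
      mul_le_mul_of_nonneg_right hKb hsα
    have h2 : (α * 2 ^ (α - 1) * W) * s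
        ≤ (α * 2 ^ (α - 1) * W) * (δ / (3 * (α * 2 ^ (α - 1) * W + 1)) * s ^ α + C₂) :=
      mul_le_mul_of_nonneg_left hSx hb0
    have hfrac : (α * 2 ^ (α - 1) * W) * (δ / (3 * (α * 2 ^ (α - 1) * W + 1))) ≤ δ / 3 := by
      rw [mul_div_assoc', div_le_div_iff₀ (by linarith : (0:ℝ) < 3 * (α * 2 ^ (α - 1) * W + 1))
        (by norm_num : (0:ℝ) < 3)]
      nlinarith [hδ.le, hb0]
    have h3 : (α * 2 ^ (α - 1) * W) * (δ / (3 * (α * 2 ^ (α - 1) * W + 1)) * s ^ α + C₂)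
        ≤ δ / 3 * s ^ α + (α * 2 ^ (α - 1) * W + 1) * C₂ := by
      have h4 := mul_le_mul_of_nonneg_right hfrac hsα
      nlinarith [hC₂0, hb0]
    linarith [e.le, h1, h2.trans h3]
  have hone : α * ρ * s ^ α + (δ / 3 * s ^ α + δ / 3 * s ^ α + δ / 3 * s ^ α)
      = -lam₁ * s ^ α := by
    rw [hδdef]
    ring
  rw [step2, step3] at step1
  linarith [step1, step4, hT1, hT2, hone]
end

section
/- Let d ≥ 1 and let b_i, d_i : ℤ_+^d ∖ {0} → [0,∞) for i = 1,…,d. Assume there exists δ > 1 such that ∑_{i=1}^d (d_i(x) − δ b_i(x)) → +∞ as |x| → ∞, where |x| = x_1 + … + x_d. Then there exists ε > 0 such that for every λ₁ > 0 there exists a constant C ≥ 0 with, for all x ∈ ℤ_+^d ∖ {0}: [ (e^ε − 1) ∑_{i=1}^d b_i(x) + (e^{−ε} − 1) ∑_{i=1}^d d_i(x) ] e^{ε|x|} ≤ −λ₁ e^{ε|x|} + C. That is, the Lyapunov function V(x) = exp(ε|x|) satisfies the Foster–Lyapunov drift inequality LV ≤ −λ₁ V + C for the multitype birth and death process with birth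 rates b_i and death rates d_i. -/
/-- For a multitype birth and death process on `ℤ₊^d` with birth rates `b i` and death
rates `dd i`, if there exists `δ > 1` such that `∑ᵢ (dᵢ(x) - δ bᵢ(x)) → +∞` as `|x| → ∞`,
then there exists `ε > 0` such that the Lyapunov function `V(x) = exp(ε |x|)` satisfies the
Foster–Lyapunov drift inequality `LV ≤ -λ₁ V + C` for every `λ₁ > 0` and some `C ≥ 0`,
where `LV(x) = [(e^ε - 1) ∑ᵢ bᵢ(x) + (e^{-ε} - 1) ∑ᵢ dᵢ(x)] e^{ε |x|}`. -/
theorem multitype_bd_lyapunov_exponential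
    (d : ℕ) (hd : 1 ≤ d)
    (b dd : Fin d → (Fin d → ℕ) → ℝ)
    (hb : ∀ i (x : Fin d → ℕ), x ≠ 0 → 0 ≤ b i x)
    (hdd : ∀ i (x : Fin d → ℕ), x ≠ 0 → 0 ≤ dd i x)
    (δ : ℝ) (hδ : 1 < δ)
    (hdrift : ∀ M : ℝ, ∃ R : ℕ, ∀ x : Fin d → ℕ, x ≠ 0 → R ≤ ∑ j, x j →
      M ≤ ∑ i, (dd i x - δ * b i x)) :
    ∃ ε : ℝ, 0 < ε ∧ ∀ lam : ℝ, 0 < lam → ∃ C : ℝ, 0 ≤ C ∧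
      ∀ x : Fin d → ℕ, x ≠ 0 →
        ((Real.exp ε - 1) * ∑ i, b i x + (Real.exp (-ε) - 1) * ∑ i, dd i x)
            * Real.exp (ε * ∑ j, (x j : ℝ))
          ≤ -lam * Real.exp (ε * ∑ j, (x j : ℝ)) + C := by
  have hδ0 : (0:ℝ) < δ := lt_trans one_pos hδ
  refine ⟨Real.log δ, Real.log_pos hδ, ?_⟩
  set ε := Real.log δ with hεdef
  have heε : Real.exp ε = δ := Real.exp_log hδ0
  have heε' : Real.exp (-ε) = δ⁻¹ := by rw [Real.exp_neg, heε]
  set c : ℝ := (δ - 1) / δ with hc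
  have hc0 : 0 < c := div_pos (by linarith) hδ0
  intro lam hlam
  obtain ⟨R, hR⟩ := hdrift (lam / c)
  set g : (Fin d → ℕ) → ℝ := fun x =>
    ((Real.exp ε - 1) * ∑ i, b i x + (Real.exp (-ε) - 1) * ∑ i, dd i x)
        * Real.exp (ε * ∑ j, (x j : ℝ)) + lam * Real.exp (ε * ∑ j, (x j : ℝ)) with hg
  set T : Finset (Fin d → ℕ) := Fintype.piFinset (fun _ => Finset.range R) with hT
  refine ⟨∑ x ∈ T, max 0 (g x),
    Finset.sum_nonneg (fun x _ => le_max_left _ _), ?_⟩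
  intro x hx
  suffices h : g x ≤ ∑ y ∈ T, max 0 (g y) by
    simp only [hg] at h; linarith
  by_cases hcase : R ≤ ∑ j, x j
  · have hS := hR x hx hcase
    have he : 0 < Real.exp (ε * ∑ j, (x j : ℝ)) := Real.exp_pos _
    have hSsum : ∑ i, (dd i x - δ * b i x) = (∑ i, dd i x) - δ * ∑ i, b i x := by
      rw [Finset.sum_sub_distrib, Finset.mul_sum]
    have hkey : g x = (lam - c * ((∑ i, dd i x) - δ * ∑ i, b i x))
        * Real.exp (ε * ∑ j, (x j : ℝ)) := by
      simp only [hg, heε, heε', hc]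
      field_simp
      ring
    have hlamS : lam ≤ c * ((∑ i, dd i x) - δ * ∑ i, b i x) := by
      rw [← hSsum]
      calc lam = c * (lam / c) := by field_simp
        _ ≤ c * ∑ i, (dd i x - δ * b i x) := by
            exact mul_le_mul_of_nonneg_left hS hc0.le
    have : g x ≤ 0 := by
      rw [hkey]
      exact mul_nonpos_of_nonpos_of_nonneg (by linarith) he.le
    exact this.trans (Finset.sum_nonneg (fun y _ => le_max_left _ _))
  · push_neg at hcase
    have hxT : x ∈ T := by
      rw [hT, Fintype.mem_piFinset]
      intro i
      rw [Finset.mem_range]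
      exact lt_of_le_of_lt
        (Finset.single_le_sum (f := fun j => x j) (fun j _ => Nat.zero_le _)
          (Finset.mem_univ i)) hcase
    calc g x ≤ max 0 (g x) := le_max_right _ _
      _ ≤ ∑ y ∈ T, max 0 (g y) :=
          Finset.single_le_sum (f := fun y => max 0 (g y)) (fun y _ => le_max_left _ _) hxT
end

section
/- Let d ≥ 1, and let β, γ, ρ, ε > 0, k ≥ 0, A ≥ 0 satisfy ρ²γ/2 + k < (β − 2ε)ρ. Let a : ℝ^d → ℝ^{d×d} be such that |a_{ij}(x)| ≤ A for all i, j, x, and ∑_{i,j} a_{ij}(x) x_i x_j ≤ γ ‖x‖² for all x ∈ ℝ^d, and let b : ℝ^d → ℝ^d satisfy limsup_{‖x‖→∞} ⟨b(x), x⟩/‖x‖ ≤ −β. Then there exists R > 0 such that for all x ∈ ℝ^d with ‖x‖ ≥ R: ρ e^{ρ‖x‖} ⟨b(x), x⟩/‖x‖ + (1/2) e^{ρ‖x‖} ∑_{i,j} a_{ij}(x) [ ρ² x_i x_j/‖x‖² − ρ x_i x_j/‖x‖³ + ρ δ_{ij}/‖x‖ ] ≤ −(k + ερ) e^{ρ‖x‖}.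 In other words, for the diffusion generator L f = (1/2) ∑_{i,j} a_{ij} ∂²_{ij} f + ∑_i b_i ∂_i f and the Lyapunov function V(x) = exp(ρ‖x‖), one has LV(x) ≤ −(k + ερ) V(x) for all ‖x‖ sufficiently large. -/
/-- Drift estimate for a diffusion with soft killing: if `a` is uniformly bounded with
quadratic form bounded by `γ ‖x‖²`, `limsup_{‖x‖→∞} ⟨b(x),x⟩/‖x‖ ≤ -β`, and
`ρ²γ/2 + k < (β - 2ε)ρ`, then the generator applied to `V(x) = exp(ρ‖x‖)` satisfies
`LV(x) ≤ -(k + ερ) V(x)` for all `‖x‖` sufficiently large. -/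
theorem diffusion_exp_lyapunov_drift
    (d : ℕ) (hd : 1 ≤ d) (β γ ρ ε k A : ℝ)
    (hβ : 0 < β) (hγ : 0 < γ) (hρ : 0 < ρ) (hε : 0 < ε) (hk : 0 ≤ k) (hA : 0 ≤ A)
    (hcond : ρ ^ 2 * γ / 2 + k < (β - 2 * ε) * ρ)
    (a : (Fin d → ℝ) → Fin d → Fin d → ℝ)
    (haA : ∀ x i j, |a x i j| ≤ A)
    (haγ : ∀ x : Fin d → ℝ, ∑ i, ∑ j, a x i j * x i * x j ≤ γ * ∑ i, x i ^ 2)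
    (b : (Fin d → ℝ) → Fin d → ℝ)
    (hb : ∀ η : ℝ, 0 < η → ∃ R : ℝ, ∀ x : Fin d → ℝ,
      R ≤ Real.sqrt (∑ i, x i ^ 2) →
        (∑ i, b x i * x i) / Real.sqrt (∑ i, x i ^ 2) ≤ -β + η) :
    ∃ R : ℝ, 0 < R ∧ ∀ x : Fin d → ℝ, R ≤ Real.sqrt (∑ i, x i ^ 2) →
      ρ * Real.exp (ρ * Real.sqrt (∑ i, x i ^ 2)) *
          ((∑ i, b x i * x i) / Real.sqrt (∑ i, x i ^ 2))
        + (1 / 2) * Real.exp (ρ * Real.sqrt (∑ i, x i ^ 2)) *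
            ∑ i, ∑ j, a x i j *
              (ρ ^ 2 * x i * x j / (∑ l, x l ^ 2)
                - ρ * x i * x j / (Real.sqrt (∑ l, x l ^ 2)) ^ 3
                + ρ * (if i = j then 1 else 0) / Real.sqrt (∑ l, x l ^ 2))
      ≤ -(k + ε * ρ) * Real.exp (ρ * Real.sqrt (∑ i, x i ^ 2)) := by
  obtain ⟨R₀, hR₀⟩ := hb ε hε
  have hδ : 0 < (β - 2 * ε) * ρ - k - ρ ^ 2 * γ / 2 := by linarith
  set δ : ℝ := (β - 2 * ε) * ρ - k - ρ ^ 2 * γ / 2 with hδdef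
  set D : ℝ := (d : ℝ) with hDdef
  have hD : 1 ≤ D := by rw [hDdef]; exact_mod_cast hd
  refine ⟨max R₀ (max 1 (ρ * A * (D ^ 2 + D) / (2 * δ))), ?_, ?_⟩
  · exact lt_of_lt_of_le one_pos ((le_max_left 1 _).trans (le_max_right _ _))
  intro x hx
  set s : ℝ := ∑ i, x i ^ 2 with hsdef
  set n : ℝ := Real.sqrt s with hndef
  have hs0 : 0 ≤ s := Finset.sum_nonneg fun i _ => sq_nonneg _
  have hn1 : 1 ≤ n :=
    le_trans ((le_max_left 1 _).trans (le_max_right _ _)) hx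
  have hn : 0 < n := lt_of_lt_of_le one_pos hn1
  have hns : n ^ 2 = s := Real.sq_sqrt hs0
  have hspos : 0 < s := hns ▸ pow_pos hn 2
  have hxi : ∀ i, |x i| ≤ n := by
    intro i
    rw [← Real.sqrt_sq_eq_abs]
    exact Real.sqrt_le_sqrt (Finset.single_le_sum (fun j _ => sq_nonneg (x j))
      (Finset.mem_univ i))
  set Q : ℝ := ∑ i, ∑ j, a x i j * x i * x j with hQdef
  set Tr : ℝ := ∑ i, a x i i with hTrdef
  have hQγ : Q ≤ γ * s := haγ x
  have hQabs : |Q| ≤ A * D ^ 2 * s := by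
    calc |Q| ≤ ∑ i, |∑ j, a x i j * x i * x j| := Finset.abs_sum_le_sum_abs _ _
      _ ≤ ∑ i, ∑ j, |a x i j * x i * x j| :=
          Finset.sum_le_sum fun i _ => Finset.abs_sum_le_sum_abs _ _
      _ ≤ ∑ _i : Fin d, ∑ _j : Fin d, A * n * n := by
          refine Finset.sum_le_sum fun i _ => Finset.sum_le_sum fun j _ => ?_
          rw [abs_mul, abs_mul]
          have h1 : |a x i j| * |x i| ≤ A * n :=
            mul_le_mul (haA x i j) (hxi i) (abs_nonneg _) hA
          exact mul_le_mul h1 (hxi j) (abs_nonneg _) (by positivity)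
      _ = D * (D * (A * n * n)) := by
          simp [Finset.sum_const, Finset.card_univ, nsmul_eq_mul, hDdef]
      _ = A * D ^ 2 * s := by rw [← hns]; ring
  have hTr : Tr ≤ D * A := by
    calc Tr ≤ ∑ _i : Fin d, A :=
          Finset.sum_le_sum fun i _ => (abs_le.mp (haA x i i)).2
      _ = D * A := by simp [Finset.sum_const, Finset.card_univ, nsmul_eq_mul, hDdef]
  have hterm : ∀ i j : Fin d, a x i j *
      (ρ ^ 2 * x i * x j / s - ρ * x i * x j / n ^ 3
        + ρ * (if i = j then (1:ℝ) else 0) / n)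
      = ρ ^ 2 / s * (a x i j * x i * x j) - ρ / n ^ 3 * (a x i j * x i * x j)
        + (if i = j then ρ / n * a x i j else 0) := by
    intro i j
    split_ifs <;> ring
  have hS : (∑ i, ∑ j, a x i j *
      (ρ ^ 2 * x i * x j / s - ρ * x i * x j / n ^ 3
        + ρ * (if i = j then (1:ℝ) else 0) / n))
      = ρ ^ 2 / s * Q - ρ / n ^ 3 * Q + ρ / n * Tr := by
    rw [hQdef, hTrdef]
    simp only [hterm, Finset.sum_add_distrib, Finset.sum_sub_distrib,
      Finset.sum_ite_eq, Finset.mem_univ, if_true, ← Finset.mul_sum]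
  -- bounds on the pieces
  have h1 : ρ ^ 2 / s * Q ≤ ρ ^ 2 * γ := by
    have := mul_le_mul_of_nonneg_left hQγ (le_of_lt (div_pos (pow_pos hρ 2) hspos))
    calc ρ ^ 2 / s * Q ≤ ρ ^ 2 / s * (γ * s) := this
      _ = ρ ^ 2 * γ := by field_simp
  have h2 : -(ρ / n ^ 3 * Q) ≤ ρ * A * D ^ 2 / n := by
    have hc : 0 ≤ ρ / n ^ 3 := by positivity
    have : -(ρ / n ^ 3 * Q) ≤ ρ / n ^ 3 * (A * D ^ 2 * s) := by
      have := mul_le_mul_of_nonneg_left ((neg_le_abs Q).trans hQabs) hc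
      linarith [this]
    calc -(ρ / n ^ 3 * Q) ≤ ρ / n ^ 3 * (A * D ^ 2 * s) := this
      _ = ρ * A * D ^ 2 / n := by
          rw [← hns]; field_simp
  have h3 : ρ / n * Tr ≤ ρ * A * D / n := by
    have hc : 0 ≤ ρ / n := by positivity
    calc ρ / n * Tr ≤ ρ / n * (D * A) := mul_le_mul_of_nonneg_left hTr hc
      _ = ρ * A * D / n := by ring
  have h4 : ρ * A * (D ^ 2 + D) / n ≤ 2 * δ := by
    rw [div_le_iff₀ hn]
    have hge : ρ * A * (D ^ 2 + D) / (2 * δ) ≤ n :=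
      le_trans ((le_max_right 1 _).trans (le_max_right _ _)) hx
    have := (div_le_iff₀ (by positivity : (0:ℝ) < 2 * δ)).mp hge
    linarith [this]
  have hB : (∑ i, b x i * x i) / n ≤ -β + ε := hR₀ x (le_trans (le_max_left _ _) hx)
  have hρB : ρ * ((∑ i, b x i * x i) / n) ≤ ρ * (-β + ε) :=
    mul_le_mul_of_nonneg_left hB hρ.le
  have key : ρ * ((∑ i, b x i * x i) / n)
      + (1 / 2) * (ρ ^ 2 / s * Q - ρ / n ^ 3 * Q + ρ / n * Tr) ≤ -(k + ε * ρ) := by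
    have hsum : -(ρ / n ^ 3 * Q) + ρ / n * Tr ≤ 2 * δ := by
      have : ρ * A * D ^ 2 / n + ρ * A * D / n = ρ * A * (D ^ 2 + D) / n := by
        field_simp
      linarith [h2, h3, h4]
    have hδ' : δ = (β - 2 * ε) * ρ - k - ρ ^ 2 * γ / 2 := hδdef
    linarith [hρB, h1, hsum, hδ']
  have he : (0:ℝ) < Real.exp (ρ * n) := Real.exp_pos _
  calc ρ * Real.exp (ρ * n) * ((∑ i, b x i * x i) / n)
        + (1 / 2) * Real.exp (ρ * n) *
            ∑ i, ∑ j, a x i j *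
              (ρ ^ 2 * x i * x j / s - ρ * x i * x j / n ^ 3
                + ρ * (if i = j then (1:ℝ) else 0) / n)
      = Real.exp (ρ * n) * (ρ * ((∑ i, b x i * x i) / n)
          + (1 / 2) * (ρ ^ 2 / s * Q - ρ / n ^ 3 * Q + ρ / n * Tr)) := by
        rw [hS]; ring
    _ ≤ Real.exp (ρ * n) * (-(k + ε * ρ)) := mul_le_mul_of_nonneg_left key he.le
    _ = -(k + ε * ρ) * Real.exp (ρ * n) := by ring
end

section
/- Let E be a set, N ≥ 2 an integer, λ₁ > 0, C ≥ 0 and k ≥ 0 real constants. Let V : E → ℝ with V(y) ≥ 1 for all y, let g : E → ℝ satisfy g(y) ≤ −λ₁ V(y) + C for all y ∈ E, and let κ : E → ℝ satisfy 0 ≤ κ(y) ≤ k for all y ∈ E. Then for every (x_1, …, x_N) ∈ E^N: ∑_{i=1}^N g(x_i) + ∑_{i=1}^N (κ(x_i)/(N−1)) ∑_{j≠i} ( V(x_j) − V(x_i) ) ≤ −( λ₁ − (N/(N−1)) k ) ∑_{i=1}^N V(x_i) + N C. -/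
/-!
Since `V ≥ 0`, a jump of particle `i` onto particle `j` changes `∑ V` by `V xⱼ - V xᵢ`, and summed
over the `N - 1` targets this is at most `∑ⱼ V xⱼ`. Weighted by the rates `κ(xᵢ)/(N-1) ≤ k/(N-1)`,
the killing part of the generator contributes at most `N/(N-1) · k · ∑ V`, while the motion of the
particles contributes at most `-λ₁ ∑ V + N C`.
-/

open Finset

theorem sum_filter_ne_sub_le_sum {ι α : Type*} [Fintype ι] [DecidableEq ι] [AddCommGroup α]
    [PartialOrder α] [IsOrderedAddMonoid α] {f : ι → α} (hf : ∀ j, 0 ≤ f j) (i : ι) :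
    ∑ j ∈ univ.filter (fun j => j ≠ i), (f j - f i) ≤ ∑ j, f j :=
  calc ∑ j ∈ univ.filter (fun j => j ≠ i), (f j - f i)
      ≤ ∑ j ∈ univ.filter (fun j => j ≠ i), f j :=
        sum_le_sum fun _ _ => sub_le_self _ (hf i)
    _ ≤ ∑ j, f j := sum_le_sum_of_subset_of_nonneg (filter_subset _ _) fun j _ _ => hf j

theorem sum_le_neg_mul_sum_add_card_mul {ι : Type*} [Fintype ι] {g V : ι → ℝ} {lam C : ℝ}
    (hg : ∀ i, g i ≤ -lam * V i + C) :
    ∑ i, g i ≤ -lam * ∑ i, V i + Fintype.card ι * C :=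
  calc ∑ i, g i ≤ ∑ i, (-lam * V i + C) := sum_le_sum fun i _ => hg i
    _ = -lam * ∑ i, V i + Fintype.card ι * C := by
      rw [sum_add_distrib, ← mul_sum, sum_const, card_univ, nsmul_eq_mul]

theorem sum_killing_term_le {ι E : Type*} [Fintype ι] [DecidableEq ι] {V κ : E → ℝ} {k : ℝ}
    (hV : ∀ y, 0 ≤ V y) (hκ : ∀ y, 0 ≤ κ y ∧ κ y ≤ k) (x : ι → E) :
    ∑ i, (κ (x i) / ((Fintype.card ι : ℝ) - 1)) *
        ∑ j ∈ univ.filter (fun j => j ≠ i), (V (x j) - V (x i))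
      ≤ (Fintype.card ι : ℝ) / ((Fintype.card ι : ℝ) - 1) * k * ∑ i, V (x i) := by
  set S := ∑ i, V (x i)
  have hS : 0 ≤ S := sum_nonneg fun i _ => hV (x i)
  have hterm : ∀ i, κ (x i) / ((Fintype.card ι : ℝ) - 1) *
      ∑ j ∈ univ.filter (fun j => j ≠ i), (V (x j) - V (x i))
        ≤ k / ((Fintype.card ι : ℝ) - 1) * S := by
    intro i
    obtain ⟨hκ0, hκk⟩ := hκ (x i)
    have hcard : (0 : ℝ) ≤ (Fintype.card ι : ℝ) - 1 := by
      have : (1 : ℝ) ≤ Fintype.card ι := Nat.one_le_cast.mpr (Fintype.card_pos_iff.mpr ⟨i⟩)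
      linarith
    calc κ (x i) / ((Fintype.card ι : ℝ) - 1) *
          ∑ j ∈ univ.filter (fun j => j ≠ i), (V (x j) - V (x i))
        ≤ κ (x i) / ((Fintype.card ι : ℝ) - 1) * S :=
          mul_le_mul_of_nonneg_left (sum_filter_ne_sub_le_sum (fun j => hV (x j)) i)
            (div_nonneg hκ0 hcard)
      _ ≤ k / ((Fintype.card ι : ℝ) - 1) * S :=
          mul_le_mul_of_nonneg_right (div_le_div_of_nonneg_right hκk hcard) hS
  calc _ ≤ ∑ _i : ι, k / ((Fintype.card ι : ℝ) - 1) * S := sum_le_sum fun i _ => hterm i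
    _ = _ := by rw [sum_const, card_univ, nsmul_eq_mul]; ring

theorem fleming_viot_lyapunov_general
    (E : Type*) (N : ℕ)
    (lam C k : ℝ)
    (V g κ : E → ℝ) (hV : ∀ y, 1 ≤ V y)
    (hg : ∀ y, g y ≤ -lam * V y + C)
    (hκ : ∀ y, 0 ≤ κ y ∧ κ y ≤ k)
    (x : Fin N → E) :
    ∑ i, g (x i)
      + ∑ i, (κ (x i) / ((N : ℝ) - 1)) *
          ∑ j ∈ Finset.univ.filter (fun j => j ≠ i), (V (x j) - V (x i))
      ≤ -(lam - ((N : ℝ) / ((N : ℝ) - 1)) * k) * ∑ i, V (x i) + (N : ℝ) * C := by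
  have hdrift := sum_le_neg_mul_sum_add_card_mul (fun i : Fin N => hg (x i))
  have hkilling := sum_killing_term_le (fun y => zero_le_one.trans (hV y)) hκ x
  rw [Fintype.card_fin] at hdrift hkilling
  linear_combination hdrift + hkilling

/-- Foster–Lyapunov inequality for the generator of the Fleming–Viot particle system:
if `g ≤ -λ₁ V + C` (with `g` playing the role of `LV`), `V ≥ 1` and `0 ≤ κ ≤ k`, then
for any `N`-tuple of particle positions,
`∑ᵢ g(xᵢ) + ∑ᵢ (κ(xᵢ)/(N-1)) ∑_{j≠i} (V(xⱼ) - V(xᵢ))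
  ≤ -(λ₁ - (N/(N-1)) k) ∑ᵢ V(xᵢ) + N C`. -/
theorem fleming_viot_lyapunov
    (E : Type*) (N : ℕ) (hN : 2 ≤ N)
    (lam C k : ℝ) (hlam : 0 < lam) (hC : 0 ≤ C) (hk : 0 ≤ k)
    (V g κ : E → ℝ) (hV : ∀ y, 1 ≤ V y)
    (hg : ∀ y, g y ≤ -lam * V y + C)
    (hκ : ∀ y, 0 ≤ κ y ∧ κ y ≤ k)
    (x : Fin N → E) :
    ∑ i, g (x i)
      + ∑ i, (κ (x i) / ((N : ℝ) - 1)) *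
          ∑ j ∈ Finset.univ.filter (fun j => j ≠ i), (V (x j) - V (x i))
      ≤ -(lam - ((N : ℝ) / ((N : ℝ) - 1)) * k) * ∑ i, V (x i) + (N : ℝ) * C :=
  fleming_viot_lyapunov_general E N lam C k V g κ hV hg hκ x
end
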